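/- arXiv:1002.3893 — 5 statements merged into one kernel-verified Lean document; each statement's English description precedes it below -/
import Mathlib

section
/- Let M be a matroid on a finite ground set and let B1 and B2 be arbitrary independent sets of M. Then there exists a subset B2' ⊆ B2 and an injective map g : B2' → B1 such that for every e ∈ B2', the set (B1 \ {g(e)}) ∪ {e} is independent in M, and for every e ∈ B2 \ B2', the set B1 ∪ {e} is independent in M. -/
/-- A matroid on a finite ground set `E`, given by its family of independent
(finite) sets, satisfying heredity and augmentation. -/
structure FinMatroid (E : Type*) [DecidableEq E] [Fintype E] where
  Indep : Finset E → Prop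
  subset_indep : ∀ ⦃A B : Finset E⦄, Indep A → B ⊆ A → Indep B
  augment : ∀ ⦃A B : Finset E⦄, Indep A → Indep B → B.card < A.card →
    ∃ e ∈ A \ B, Indep (insert e B)

/-- Any independent set can be extended, using elements of another independent
set `B`, to an independent set of the same cardinality as `B`. -/
lemma FinMatroid.exists_ext {E : Type*} [DecidableEq E] [Fintype E] (M : FinMatroid E) :
    ∀ (n : ℕ) (A B : Finset E), M.Indep A → M.Indep B → A.card + n = B.card →
      ∃ A', A ⊆ A' ∧ A' ⊆ A ∪ B ∧ A'.card = B.card ∧ M.Indep A' := by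
  intro n
  induction n with
  | zero => intro A B hA _ hc; exact ⟨A, Finset.Subset.refl A, Finset.subset_union_left, by
      simpa using hc, hA⟩
  | succ n ih =>
    intro A B hA hB hc
    have hlt : A.card < B.card := by omega
    obtain ⟨x, hx, hxi⟩ := M.augment hB hA hlt
    rw [Finset.mem_sdiff] at hx
    have hcard : (insert x A).card = A.card + 1 := Finset.card_insert_of_notMem hx.2
    obtain ⟨A', h1, h2, h3, h4⟩ := ih (insert x A) B hxi hB (by omega)
    refine ⟨A', (Finset.subset_insert _ _).trans h1, ?_, h3, h4⟩
    intro y hy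
    rcases Finset.mem_union.mp (h2 hy) with h | h
    · rcases Finset.mem_insert.mp h with rfl | h
      · exact Finset.mem_union_right _ hx.1
      · exact Finset.mem_union_left _ h
    · exact Finset.mem_union_right _ h

/-- For arbitrary independent sets `B1`, `B2` of a matroid,
there is a subset `B2' ⊆ B2` and an injective map `g : B2' → B1` such that for
every `e ∈ B2'`, the set `(B1 \ {g e}) ∪ {e}` is independent, and for every
`e ∈ B2 \ B2'`, the set `B1 ∪ {e}` is independent. -/
theorem matroid_partial_exchange_map
    {E : Type*} [DecidableEq E] [Fintype E] (M : FinMatroid E)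
    (B1 B2 : Finset E) (h1 : M.Indep B1) (h2 : M.Indep B2) :
    ∃ B2' : Finset E, B2' ⊆ B2 ∧
      ∃ g : E → E, Set.InjOn g ↑B2' ∧
        (∀ e ∈ B2', g e ∈ B1 ∧ M.Indep (insert e (B1.erase (g e)))) ∧
        (∀ e ∈ B2 \ B2', M.Indep (insert e B1)) := by
  classical
  -- the set of elements of B2 that cannot simply be added to B1
  set D : Finset E := B2.filter (fun e => ¬ M.Indep (insert e B1)) with hD
  have hDsub : D ⊆ B2 := Finset.filter_subset _ _
  have hDnotB1 : ∀ e ∈ D, e ∉ B1 := by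
    intro e he heB1
    have := (Finset.mem_filter.mp he).2
    rw [Finset.insert_eq_self.mpr heB1] at this
    exact this h1
  -- exchange candidates
  set t : E → Finset E := fun e => B1.filter (fun x => M.Indep (insert e (B1.erase x)))
    with ht
  -- key lemma: if e ∈ D and N ⊇ t e, N ⊆ B1, then insert e N is dependent
  have key : ∀ e ∈ D, ∀ N : Finset E, t e ⊆ N → N ⊆ B1 → ¬ M.Indep (insert e N) := by
    intro e heD N htN hNB1 hind
    have hdep : ¬ M.Indep (insert e B1) := (Finset.mem_filter.mp heD).2
    have heB1 : e ∉ B1 := hDnotB1 e heD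
    have heN : e ∉ N := fun h => heB1 (hNB1 h)
    have hsub : insert e N ⊆ insert e B1 := Finset.insert_subset_insert _ hNB1
    have hcard : (insert e N).card ≤ B1.card := by
      by_contra hc
      push_neg at hc
      have h1' : (insert e B1).card = B1.card + 1 := Finset.card_insert_of_notMem heB1
      have h2' : (insert e N).card ≤ (insert e B1).card := Finset.card_le_card hsub
      have : insert e N = insert e B1 := Finset.eq_of_subset_of_card_le hsub (by omega)
      rw [this] at hind; exact hdep hind
    obtain ⟨A', hA1, hA2, hA3, hA4⟩ := M.exists_ext (B1.card - (insert e N).card)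
      (insert e N) B1 hind h1 (by omega)
    have hA'sub : A' ⊆ insert e B1 := by
      intro y hy
      rcases Finset.mem_union.mp (hA2 hy) with h | h
      · exact hsub h
      · exact Finset.mem_insert_of_mem h
    have heA' : e ∈ A' := hA1 (Finset.mem_insert_self _ _)
    -- A' ≠ insert e B1 since the latter is dependent
    have hne : A' ≠ insert e B1 := fun h => hdep (h ▸ hA4)
    -- so B1 \ A' is a single element x
    have herase : A'.erase e ⊆ B1 := by
      intro y hy
      have h1' := Finset.mem_of_mem_erase hy
      have h2' := Finset.ne_of_mem_erase hy
      rcases Finset.mem_insert.mp (hA'sub h1') with rfl | h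
      · exact absurd rfl h2'
      · exact h
    have hcerase : (A'.erase e).card = B1.card - 1 := by
      rw [Finset.card_erase_of_mem heA', hA3]
    have hB1pos : 1 ≤ B1.card := by
      have : (insert e N).card ≤ B1.card := hcard
      have h0 : 0 < (insert e N).card := Finset.card_pos.mpr ⟨e, Finset.mem_insert_self _ _⟩
      omega
    -- find the missing element x
    have hne2 : A'.erase e ≠ B1 := by
      intro h
      apply hne
      have : A' = insert e (A'.erase e) := (Finset.insert_erase heA').symm
      rw [this, h]
    obtain ⟨x, hxB1, hxA'⟩ : ∃ x ∈ B1, x ∉ A'.erase e := by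
      by_contra hc
      push_neg at hc
      exact hne2 (Finset.eq_of_subset_of_card_le (fun y hy => hc y hy)
        (by omega)).symm
    have hxe : x ≠ e := fun h => heB1 (h ▸ hxB1)
    have hxA'2 : x ∉ A' := fun h => hxA' (Finset.mem_erase.mpr ⟨hxe, h⟩)
    -- A'.erase e ⊆ B1.erase x, equal cards, so A' ⊆ insert e (B1.erase x)
    have hsub2 : A'.erase e ⊆ B1.erase x := fun y hy =>
      Finset.mem_erase.mpr ⟨fun h => hxA' (h ▸ hy), herase hy⟩
    have hA'eq : A' ⊆ insert e (B1.erase x) := by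
      intro y hy
      rcases eq_or_ne y e with rfl | hye
      · exact Finset.mem_insert_self _ _
      · exact Finset.mem_insert_of_mem (hsub2 (Finset.mem_erase.mpr ⟨hye, hy⟩))
    -- hence insert e (B1.erase x) is independent (it has card = B1.card ≥ A'.card,
    have : A' = insert e (B1.erase x) := by
      apply Finset.eq_of_subset_of_card_le hA'eq
      rw [Finset.card_insert_of_notMem (fun h => heB1 (Finset.mem_of_mem_erase h)),
        Finset.card_erase_of_mem hxB1, hA3]
      omega
    have hxte : x ∈ t e := Finset.mem_filter.mpr ⟨hxB1, this ▸ hA4⟩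
    exact hxA'2 (hA1 (Finset.mem_insert_of_mem (htN hxte)))
  -- Hall's condition on the subtype of D
  have hall : ∀ s : Finset {e // e ∈ D}, s.card ≤ (s.biUnion (fun e => t e.val)).card := by
    intro s
    by_contra hc
    push_neg at hc
    set N : Finset E := s.biUnion (fun e => t e.val) with hN
    set S : Finset E := s.image Subtype.val with hS
    have hScard : S.card = s.card := Finset.card_image_of_injective _ Subtype.val_injective
    have hSind : M.Indep S := M.subset_indep h2 (by
      intro y hy
      obtain ⟨⟨z, hz⟩, _, rfl⟩ := Finset.mem_image.mp hy
      exact hDsub hz)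
    have hNB1 : N ⊆ B1 := by
      intro y hy
      obtain ⟨z, _, hz2⟩ := Finset.mem_biUnion.mp hy
      exact Finset.mem_of_mem_filter y hz2
    have hNind : M.Indep N := M.subset_indep h1 hNB1
    obtain ⟨e, he, hei⟩ := M.augment hSind hNind (by omega)
    rw [Finset.mem_sdiff] at he
    obtain ⟨⟨z, hzD⟩, hzs, hze⟩ := Finset.mem_image.mp he.1
    subst hze
    refine key z hzD N ?_ hNB1 hei
    intro y hy
    exact Finset.mem_biUnion.mpr ⟨⟨z, hzD⟩, hzs, hy⟩
  obtain ⟨f, hfinj, hft⟩ :=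
    (Finset.all_card_le_biUnion_card_iff_exists_injective (fun e : {e // e ∈ D} => t e.val)).mp
      hall
  refine ⟨D, hDsub, fun e => if h : e ∈ D then f ⟨e, h⟩ else e, ?_, ?_, ?_⟩
  · intro a ha b hb hab
    simp only [Finset.coe_mem] at *
    rw [Finset.mem_coe] at ha hb
    rw [dif_pos ha, dif_pos hb] at hab
    exact congrArg Subtype.val (hfinj hab)
  · intro e he
    have := hft ⟨e, he⟩
    rw [Finset.mem_filter] at this
    simpa only [dif_pos he] using this
  · intro e he
    rw [Finset.mem_sdiff] at he
    have := he.2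
    rw [hD, Finset.mem_filter] at this
    push_neg at this
    exact this he.1
end

section
/- Let M1 and M2 be matroids on a common finite ground set E, let w : E → ℝ be strictly positive, and let J denote the family of common independent sets (sets independent in both M1 and M2). Let A1 ∈ J have maximum w-weight among all sets in J, and let A2 ∈ J satisfy A1 ∩ A2 = ∅. Then there exist subsets D1, D2 ⊆ A2 with D1 ∪ D2 = A2 and injective maps g1 : D1 → A1 and g2 : D2 → A1 such that: for every e ∈ D1, (A1 \ {g1(e)}) ∪ {e} is independent in M1; for every e ∈ A2 \ D1, A1 ∪ {e} is independent in M1; for every e ∈ D2, (A1 \ {g2(e)}) ∪ {e} is independent in M2; and for every e ∈ A2 \ D2, A1 ∪ {e} is independent in M2. -/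
section Aux

variable {E : Type*} [DecidableEq E] [Fintype E] (M : FinMatroid E)

/-- Any independent subset of `X` extends to a maximal independent subset of `X`. -/
lemma FinMatroid.exists_maximal {I X : Finset E} (hI : M.Indep I) (hIX : I ⊆ X) :
    ∃ J, I ⊆ J ∧ J ⊆ X ∧ M.Indep J ∧ ∀ K, M.Indep K → K ⊆ X → J ⊆ K → K = J := by
  classical
  obtain ⟨J, hJ, hmax⟩ := (X.powerset.filter (fun J => I ⊆ J ∧ M.Indep J)).exists_max_image
    Finset.card ⟨I, by simp [hI, hIX]⟩
  simp only [Finset.mem_filter, Finset.mem_powerset] at hJ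
  refine ⟨J, hJ.2.1, hJ.1, hJ.2.2, ?_⟩
  intro K hK hKX hJK
  by_contra hne
  have hlt : J.card < K.card := Finset.card_lt_card (hJK.ssubset_of_ne (Ne.symm hne))
  have := hmax K (by
    simp only [Finset.mem_filter, Finset.mem_powerset]
    exact ⟨hKX, hJ.2.1.trans hJK, hK⟩)
  omega

/-- Any independent subset of `X` has card at most that of a maximal independent subset. -/
lemma FinMatroid.card_le_maximal {I J X : Finset E} (hI : M.Indep I) (hIX : I ⊆ X)
    (hJ : M.Indep J) (hJX : J ⊆ X)
    (hmax : ∀ K, M.Indep K → K ⊆ X → J ⊆ K → K = J) : I.card ≤ J.card := by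
  by_contra h
  push_neg at h
  obtain ⟨e, he, hind⟩ := M.augment hI hJ h
  rw [Finset.mem_sdiff] at he
  have heq := hmax (insert e J) hind (Finset.insert_subset (hIX he.1) hJX)
    (Finset.subset_insert _ _)
  exact he.2 (heq ▸ Finset.mem_insert_self e J)

/-- The key single-matroid exchange lemma. -/
lemma FinMatroid.key (A D : Finset E) (hA : M.Indep A) (hD : M.Indep D)
    (hnotin : ∀ e ∈ D, e ∉ A) (hdep : ∀ e ∈ D, ¬ M.Indep (insert e A)) :
    ∃ g : E → E, Set.InjOn g ↑D ∧
      ∀ e ∈ D, g e ∈ A ∧ M.Indep (insert e (A.erase (g e))) := by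
  classical
  set t : E → Finset E := fun e => A.filter (fun x => M.Indep (insert e (A.erase x))) with ht
  have htA : ∀ e, t e ⊆ A := fun e => Finset.filter_subset _ _
  -- Step 1: for e ∈ D, insert e (t e) is dependent.
  have step1 : ∀ e ∈ D, ¬ M.Indep (insert e (t e)) := by
    intro e he hcon
    have heA : e ∉ A := hnotin e he
    have hsub0 : insert e (t e) ⊆ insert e A := Finset.insert_subset_insert _ (htA e)
    obtain ⟨J, hsub, hJX, hJind, hJmax⟩ := M.exists_maximal hcon hsub0
    have hcardA : A.card ≤ J.card :=
      M.card_le_maximal hA (Finset.subset_insert e A) hJind hJX hJmax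
    have heJ : e ∈ J := hsub (Finset.mem_insert_self _ _)
    have hne : J ≠ insert e A := fun h => hdep e he (h ▸ hJind)
    have hlt : J.card < (insert e A).card := Finset.card_lt_card (hJX.ssubset_of_ne hne)
    rw [Finset.card_insert_of_notMem heA] at hlt
    have hcardeq : J.card = A.card := by omega
    have hJpos : 0 < J.card := Finset.card_pos.mpr ⟨e, heJ⟩
    have hApos : 0 < A.card := by omega
    -- A ∩ J = J.erase e
    have hinter : A ∩ J = J.erase e := by
      ext x
      simp only [Finset.mem_inter, Finset.mem_erase]
      constructor
      · rintro ⟨hxA, hxJ⟩; exact ⟨fun h => heA (h ▸ hxA), hxJ⟩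
      · rintro ⟨hxe, hxJ⟩
        rcases Finset.mem_insert.mp (hJX hxJ) with h | h
        · exact absurd h hxe
        · exact ⟨h, hxJ⟩
    have hcardinter : (A ∩ J).card + 1 = A.card := by
      rw [hinter, Finset.card_erase_of_mem heJ]
      omega
    have hsd : (A \ J).card = 1 := by
      have h1 := Finset.card_inter_add_card_sdiff A J
      omega
    obtain ⟨x, hx⟩ := Finset.card_eq_one.mp hsd
    have hxA : x ∈ A := by
      have : x ∈ A \ J := hx ▸ Finset.mem_singleton_self x
      exact (Finset.mem_sdiff.mp this).1
    have hxJ : x ∉ J := by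
      have : x ∈ A \ J := hx ▸ Finset.mem_singleton_self x
      exact (Finset.mem_sdiff.mp this).2
    -- J ⊆ insert e (A.erase x)
    have hJsub : J ⊆ insert e (A.erase x) := by
      intro y hy
      rcases Finset.mem_insert.mp (hJX hy) with rfl | hyA
      · exact Finset.mem_insert_self _ _
      · refine Finset.mem_insert_of_mem (Finset.mem_erase.mpr ⟨?_, hyA⟩)
        rintro rfl; exact hxJ hy
    have hcard2 : (insert e (A.erase x)).card ≤ J.card := by
      have h1 : e ∉ A.erase x := fun h => heA (Finset.mem_of_mem_erase h)
      rw [Finset.card_insert_of_notMem h1, Finset.card_erase_of_mem hxA, hcardeq]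
      omega
    have heq := Finset.eq_of_subset_of_card_le hJsub hcard2
    have hind2 : M.Indep (insert e (A.erase x)) := by
      first
      | exact M.subset_indep hJind heq.le
      | exact M.subset_indep hJind heq.ge
    have hxte : x ∈ t e := Finset.mem_filter.mpr ⟨hxA, hind2⟩
    exact hxJ (hsub (Finset.mem_insert_of_mem hxte))
  -- Step 2: Hall condition.
  have hall : ∀ (s : Finset {x // x ∈ D}), s.card ≤ (s.biUnion (fun e => t e.1)).card := by
    intro s
    set S : Finset E := s.image Subtype.val with hS
    have hScard : S.card = s.card := Finset.card_image_of_injective _ Subtype.val_injective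
    set T := s.biUnion (fun e => t e.1) with hT
    have hTA : T ⊆ A := by
      intro x hx
      obtain ⟨e, _, hx⟩ := Finset.mem_biUnion.mp hx
      exact htA _ hx
    have hSD : S ⊆ D := by
      intro x hx
      obtain ⟨e, _, rfl⟩ := Finset.mem_image.mp hx
      exact e.2
    have htT : ∀ e ∈ S, t e ⊆ T := by
      intro e he x hx
      obtain ⟨e', he', rfl⟩ := Finset.mem_image.mp he
      exact Finset.mem_biUnion.mpr ⟨e', he', hx⟩
    have hTind : M.Indep T := M.subset_indep hA hTA
    have hTmax : ∀ K, M.Indep K → K ⊆ S ∪ T → T ⊆ K → K = T := by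
      intro K hK hKsub hTK
      by_contra hne
      obtain ⟨e, heK, heT⟩ := Finset.exists_of_ssubset (hTK.ssubset_of_ne (Ne.symm hne))
      have heS : e ∈ S := (Finset.mem_union.mp (hKsub heK)).resolve_right heT
      have hsub : insert e (t e) ⊆ K := Finset.insert_subset heK ((htT e heS).trans hTK)
      exact step1 e (hSD heS) (M.subset_indep hK hsub)
    have hle : S.card ≤ T.card :=
      M.card_le_maximal (M.subset_indep hD hSD) Finset.subset_union_left hTind
        Finset.subset_union_right hTmax
    omega
  obtain ⟨f, hfinj, hf⟩ :=
    (Finset.all_card_le_biUnion_card_iff_exists_injective (fun e : {x // x ∈ D} => t e.1)).mp hall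
  refine ⟨fun e => if h : e ∈ D then f ⟨e, h⟩ else e, ?_, ?_⟩
  · intro a ha b hb hab
    simp only [Finset.mem_coe] at ha hb
    simp only [dif_pos ha, dif_pos hb] at hab
    have := hfinj hab
    exact congrArg Subtype.val this
  · intro e he
    simp only [dif_pos he]
    have := hf ⟨e, he⟩
    rw [Finset.mem_filter] at this
    exact this

end Aux

/-- Let `M1`, `M2` be matroids on a common finite ground set,
`w` strictly positive weights, `A1` a common independent set of maximum
`w`-weight among common independent sets, and `A2` a common independent set
disjoint from `A1`. Then there are `D1, D2 ⊆ A2` with `D1 ∪ D2 = A2` and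
injective maps `g1 : D1 → A1`, `g2 : D2 → A1` such that: for `e ∈ D1`,
`(A1 \ {g1 e}) ∪ {e}` is independent in `M1`; for `e ∈ A2 \ D1`, `A1 ∪ {e}` is
independent in `M1`; and similarly for `D2`, `g2` with `M2`. -/
theorem matroid_intersection_exchange_maps
    {E : Type*} [DecidableEq E] [Fintype E] (M1 M2 : FinMatroid E)
    (w : E → ℝ) (hw : ∀ e, 0 < w e)
    (A1 A2 : Finset E)
    (hA1 : M1.Indep A1 ∧ M2.Indep A1)
    (hA1max : ∀ S : Finset E, M1.Indep S → M2.Indep S →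
      ∑ e ∈ S, w e ≤ ∑ e ∈ A1, w e)
    (hA2 : M1.Indep A2 ∧ M2.Indep A2)
    (hdisj : A1 ∩ A2 = ∅) :
    ∃ D1 D2 : Finset E, D1 ⊆ A2 ∧ D2 ⊆ A2 ∧ D1 ∪ D2 = A2 ∧
      ∃ g1 g2 : E → E, Set.InjOn g1 ↑D1 ∧ Set.InjOn g2 ↑D2 ∧
        (∀ e ∈ D1, g1 e ∈ A1 ∧ M1.Indep (insert e (A1.erase (g1 e)))) ∧
        (∀ e ∈ A2 \ D1, M1.Indep (insert e A1)) ∧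
        (∀ e ∈ D2, g2 e ∈ A1 ∧ M2.Indep (insert e (A1.erase (g2 e)))) ∧
        (∀ e ∈ A2 \ D2, M2.Indep (insert e A1)) := by
  classical
  have hnotin : ∀ e ∈ A2, e ∉ A1 := by
    intro e he h
    have : e ∈ A1 ∩ A2 := Finset.mem_inter.mpr ⟨h, he⟩
    rw [hdisj] at this
    exact absurd this (Finset.notMem_empty e)
  set D1 : Finset E := A2.filter (fun e => ¬ M1.Indep (insert e A1)) with hD1
  set D2 : Finset E := A2.filter (fun e => ¬ M2.Indep (insert e A1)) with hD2
  have hD1sub : D1 ⊆ A2 := Finset.filter_subset _ _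
  have hD2sub : D2 ⊆ A2 := Finset.filter_subset _ _
  have hunion : D1 ∪ D2 = A2 := by
    apply Finset.Subset.antisymm (Finset.union_subset hD1sub hD2sub)
    intro e he
    by_contra hne
    rw [Finset.mem_union] at hne
    push_neg at hne
    have h1 : M1.Indep (insert e A1) := by
      by_contra h
      exact hne.1 (Finset.mem_filter.mpr ⟨he, h⟩)
    have h2 : M2.Indep (insert e A1) := by
      by_contra h
      exact hne.2 (Finset.mem_filter.mpr ⟨he, h⟩)
    have hle := hA1max (insert e A1) h1 h2
    rw [Finset.sum_insert (hnotin e he)] at hle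
    have := hw e
    linarith
  obtain ⟨g1, hg1inj, hg1⟩ := M1.key A1 D1 hA1.1 (M1.subset_indep hA2.1 hD1sub)
    (fun e he => hnotin e (hD1sub he))
    (fun e he => (Finset.mem_filter.mp he).2)
  obtain ⟨g2, hg2inj, hg2⟩ := M2.key A1 D2 hA1.2 (M2.subset_indep hA2.2 hD2sub)
    (fun e he => hnotin e (hD2sub he))
    (fun e he => (Finset.mem_filter.mp he).2)
  refine ⟨D1, D2, hD1sub, hD2sub, hunion, g1, g2, hg1inj, hg2inj, hg1, ?_, hg2, ?_⟩
  · intro e he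
    rw [Finset.mem_sdiff] at he
    by_contra h
    exact he.2 (Finset.mem_filter.mpr ⟨he.1, h⟩)
  · intro e he
    rw [Finset.mem_sdiff] at he
    by_contra h
    exact he.2 (Finset.mem_filter.mpr ⟨he.1, h⟩)
end

section
/- Let M1 and M2 be matroids on a common finite ground set E, let w : E → ℝ be strictly positive, and let J denote the family of common independent sets. Let A1 ∈ J have maximum w-weight among all sets in J, let A2 ∈ J satisfy A1 ∩ A2 = ∅, and let D1, D2 ⊆ A2 and injective maps g1 : D1 → A1, g2 : D2 → A1 be such that for every e ∈ D1, (A1 \ {g1(e)}) ∪ {e} is independent in M1, for every e ∈ A2 \ D1, A1 ∪ {e} is independent in M1, for every e ∈ D2, (A1 \ {g2(e)}) ∪ {e} is independent in M2, and for every e ∈ A2 \ D2, A1 ∪ {e} is independent in M2. Then for every e ∈ A2, w(e) ≤ w1(e) + w2(e), where wi(e) = w(gi(e)) if e ∈ Di and wi(e) = 0 otherwise; in particular max(w1(e), w2(e)) ≥ w(e)/2. -/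
/-!
Put `e ∈ A2` into `A1` and take out `g1 e` (if `e ∈ D1`) and `g2 e` (if `e ∈ D2`). Removing
more elements preserves independence, so the result is independent in `M1` (which only needs
`g1 e` removed) and in `M2` (which only needs `g2 e` removed). Since `A1` has maximum weight
among common independent sets, `w e` is at most the weight taken out, hence at most
`w1 e + w2 e`.
-/

open Finset

theorem Finset.sum_union_le_add_of_nonneg {ι β : Type*} [DecidableEq ι] [AddCommMonoid β]
    [PartialOrder β] [IsOrderedAddMonoid β] {f : ι → β} (hf : ∀ i, 0 ≤ f i) (s t : Finset ι) :
    ∑ i ∈ s ∪ t, f i ≤ ∑ i ∈ s, f i + ∑ i ∈ t, f i := by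
  rw [← sum_union_inter]
  exact le_add_of_nonneg_right (sum_nonneg fun i _ => hf i)

namespace FinMatroid

variable {E : Type*} [DecidableEq E] [Fintype E]

theorem Indep.insert_sdiff_of_subset {M : FinMatroid E} {e : E} {A X Y : Finset E}
    (h : M.Indep (insert e (A \ X))) (hXY : X ⊆ Y) : M.Indep (insert e (A \ Y)) :=
  M.subset_indep h (insert_subset_insert _ (sdiff_subset_sdiff subset_rfl hXY))

theorem le_sum_of_indep_insert_sdiff {β : Type*} [AddCommMonoid β] [PartialOrder β]
    [IsOrderedCancelAddMonoid β] {M1 M2 : FinMatroid E} {w : E → β} {A X : Finset E} {e : E}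
    (hmax : ∀ S : Finset E, M1.Indep S → M2.Indep S → ∑ x ∈ S, w x ≤ ∑ x ∈ A, w x)
    (he : e ∉ A) (hX : X ⊆ A)
    (h1 : M1.Indep (insert e (A \ X))) (h2 : M2.Indep (insert e (A \ X))) :
    w e ≤ ∑ x ∈ X, w x := by
  have hle := hmax _ h1 h2
  rwa [sum_insert fun h => he (mem_sdiff.1 h).1, ← sum_sdiff hX, add_comm (w e),
    add_le_add_iff_left] at hle

end FinMatroid

/-- The paper's `wi e` is the weight of `exchangeSet Di gi e`. -/
def exchangeSet {E : Type*} [DecidableEq E] (D : Finset E) (g : E → E) (e : E) : Finset E :=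
  if e ∈ D then {g e} else ∅

section exchangeSet

variable {E : Type*} [DecidableEq E] {D A : Finset E} {g : E → E} {e : E}

theorem exchangeSet_subset (hg : ∀ e ∈ D, g e ∈ A) : exchangeSet D g e ⊆ A := by
  unfold exchangeSet
  split_ifs with h
  · exact singleton_subset_iff.2 (hg e h)
  · exact empty_subset A

theorem sum_exchangeSet {β : Type*} [AddCommMonoid β] (w : E → β) :
    ∑ x ∈ exchangeSet D g e, w x = if e ∈ D then w (g e) else 0 := by
  unfold exchangeSet
  split_ifs <;> simp

theorem FinMatroid.indep_insert_sdiff_exchangeSet [Fintype E] {M : FinMatroid E} {B : Finset E}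
    (hin : ∀ e ∈ D, M.Indep (insert e (A.erase (g e))))
    (hout : ∀ e ∈ B \ D, M.Indep (insert e A)) (he : e ∈ B) :
    M.Indep (insert e (A \ exchangeSet D g e)) := by
  unfold exchangeSet
  split_ifs with h
  · simpa [sdiff_singleton_eq_erase] using hin e h
  · simpa using hout e (mem_sdiff.2 ⟨he, h⟩)

end exchangeSet

theorem matroid_intersection_exchange_weight_bound_general
    {E : Type*} [DecidableEq E] [Fintype E] (M1 M2 : FinMatroid E)
    (w : E → ℝ) (hw : ∀ e, 0 < w e)
    (A1 A2 : Finset E)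
    (hA1max : ∀ S : Finset E, M1.Indep S → M2.Indep S →
      ∑ e ∈ S, w e ≤ ∑ e ∈ A1, w e)
    (hdisj : A1 ∩ A2 = ∅)
    (D1 D2 : Finset E)
    (g1 g2 : E → E)
    (hg1 : ∀ e ∈ D1, g1 e ∈ A1 ∧ M1.Indep (insert e (A1.erase (g1 e))))
    (hg1out : ∀ e ∈ A2 \ D1, M1.Indep (insert e A1))
    (hg2 : ∀ e ∈ D2, g2 e ∈ A1 ∧ M2.Indep (insert e (A1.erase (g2 e))))
    (hg2out : ∀ e ∈ A2 \ D2, M2.Indep (insert e A1)) :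
    ∀ e ∈ A2,
      w e ≤ (if e ∈ D1 then w (g1 e) else 0) + (if e ∈ D2 then w (g2 e) else 0) ∧
      w e / 2 ≤ max (if e ∈ D1 then w (g1 e) else 0) (if e ∈ D2 then w (g2 e) else 0) := by
  intro e he
  have heA1 : e ∉ A1 := fun h => by simpa [hdisj] using mem_inter.2 ⟨h, he⟩
  set X1 := exchangeSet D1 g1 e
  set X2 := exchangeSet D2 g2 e
  have hX : X1 ∪ X2 ⊆ A1 := union_subset (exchangeSet_subset fun e he => (hg1 e he).1)
    (exchangeSet_subset fun e he => (hg2 e he).1)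
  have hI1 : M1.Indep (insert e (A1 \ (X1 ∪ X2))) :=
    (FinMatroid.indep_insert_sdiff_exchangeSet (fun e he => (hg1 e he).2) hg1out he
      ).insert_sdiff_of_subset subset_union_left
  have hI2 : M2.Indep (insert e (A1 \ (X1 ∪ X2))) :=
    (FinMatroid.indep_insert_sdiff_exchangeSet (fun e he => (hg2 e he).2) hg2out he
      ).insert_sdiff_of_subset subset_union_right
  have hsum : w e ≤ (if e ∈ D1 then w (g1 e) else 0) + (if e ∈ D2 then w (g2 e) else 0) :=
    calc w e ≤ ∑ x ∈ X1 ∪ X2, w x :=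
          FinMatroid.le_sum_of_indep_insert_sdiff hA1max heA1 hX hI1 hI2
      _ ≤ ∑ x ∈ X1, w x + ∑ x ∈ X2, w x :=
          sum_union_le_add_of_nonneg (fun x => (hw x).le) X1 X2
      _ = _ := by rw [sum_exchangeSet, sum_exchangeSet]
  refine ⟨hsum, ?_⟩
  by_contra! hlt
  rw [max_lt_iff] at hlt
  linarith [hlt.1, hlt.2]

/-- With `A1` a maximum-`w`-weight common independent set of
matroids `M1`, `M2`, `A2` a common independent set disjoint from `A1`, and
exchange data `D1, D2 ⊆ A2`, injective `g1 : D1 → A1`, `g2 : D2 → A1` as in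
Statement 2, then for every `e ∈ A2`, `w e ≤ w1 e + w2 e`, where
`wi e = w (gi e)` if `e ∈ Di` and `wi e = 0` otherwise; in particular
`max (w1 e) (w2 e) ≥ w e / 2`. -/
theorem matroid_intersection_exchange_weight_bound
    {E : Type*} [DecidableEq E] [Fintype E] (M1 M2 : FinMatroid E)
    (w : E → ℝ) (hw : ∀ e, 0 < w e)
    (A1 A2 : Finset E)
    (hA1 : M1.Indep A1 ∧ M2.Indep A1)
    (hA1max : ∀ S : Finset E, M1.Indep S → M2.Indep S →
      ∑ e ∈ S, w e ≤ ∑ e ∈ A1, w e)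
    (hA2 : M1.Indep A2 ∧ M2.Indep A2)
    (hdisj : A1 ∩ A2 = ∅)
    (D1 D2 : Finset E) (hD1 : D1 ⊆ A2) (hD2 : D2 ⊆ A2)
    (g1 g2 : E → E) (hg1inj : Set.InjOn g1 ↑D1) (hg2inj : Set.InjOn g2 ↑D2)
    (hg1 : ∀ e ∈ D1, g1 e ∈ A1 ∧ M1.Indep (insert e (A1.erase (g1 e))))
    (hg1out : ∀ e ∈ A2 \ D1, M1.Indep (insert e A1))
    (hg2 : ∀ e ∈ D2, g2 e ∈ A1 ∧ M2.Indep (insert e (A1.erase (g2 e))))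
    (hg2out : ∀ e ∈ A2 \ D2, M2.Indep (insert e A1)) :
    ∀ e ∈ A2,
      w e ≤ (if e ∈ D1 then w (g1 e) else 0) + (if e ∈ D2 then w (g2 e) else 0) ∧
      w e / 2 ≤ max (if e ∈ D1 then w (g1 e) else 0) (if e ∈ D2 then w (g2 e) else 0) :=
  matroid_intersection_exchange_weight_bound_general M1 M2 w hw A1 A2 hA1max hdisj D1 D2 g1 g2 hg1
    hg1out hg2 hg2out
end

section
/- Fix n, m and capacities k_1, …, k_m ≥ 1. Let q : [n]×[m] → ℝ_{≥0} satisfy Σ_{e∈S} q(e) ≤ r(S) for every S ⊆ [n]×[m]. Then for every v : [n]×[m] → ℝ_{≥0} and every matching A1, Σ_{e ∉ A1} q(e)·v(e) ≤ max over matchings M with M ∩ A1 = ∅ of Σ_{e∈M} v(e). -/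
/-!
The star constraints `∑_{e ∈ S} q e ≤ r(S)`, for `S` the edges at one agent or at one item, say that
`q` lies in the fractional b-matching polytope (agent capacities `1`, item capacities `k`). A
linear functional attains its maximum on this compact polytope at an extreme point, and extreme
points are integral: at a point `x` with non-integral entries on `F`, a tight vertex cannot meet
exactly one edge of `F`, so counting the tight constraints against `#F` yields a nonzero `d`
supported on `F` with `x ± ε • d` still feasible. Applied to `v` zeroed on `A1`, an integral
maximizer is a matching whose edges outside `A1` are worth at least `∑_{e ∉ A1} q e * v e`.
-/

/-- `S` is a matching: each agent `i` appears in at most one pair of `S` and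
each item `j` appears in at most `k j` pairs of `S`. -/
def IsMatching (n m : ℕ) (k : Fin m → ℕ) (S : Finset (Fin n × Fin m)) : Prop :=
  (∀ i : Fin n, (S.filter fun e => e.1 = i).card ≤ 1) ∧
  (∀ j : Fin m, (S.filter fun e => e.2 = j).card ≤ k j)

/-- `matchRank n m k S` is the maximum cardinality of a matching contained
in `S`. -/
noncomputable def matchRank (n m : ℕ) (k : Fin m → ℕ)
    (S : Finset (Fin n × Fin m)) : ℕ :=
  sSup {c : ℕ | ∃ M : Finset (Fin n × Fin m), M ⊆ S ∧ IsMatching n m k M ∧ M.card = c}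

open Finset Filter Topology

section Counting

variable {α β : Type*}

lemma two_mul_card_two_le_fibers_add_card_singleton_fibers_le [Fintype β] [DecidableEq β]
    (s : Finset α) (f : α → β) :
    2 * #{b | 2 ≤ #{a ∈ s | f a = b}} + #{b | #{a ∈ s | f a = b} = 1} ≤ #s := by
  rw [card_eq_sum_card_fiberwise (t := univ) fun a _ => mem_coe.2 (mem_univ (f a)),
    card_filter, card_filter, mul_sum, ← sum_add_distrib]
  exact sum_le_sum fun b _ => by split_ifs <;> omega

open scoped Classical in
lemma card_filter_notMem_range_intCast_ne_one {s : Finset α} {f : α → ℝ}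
    (hs : ∑ a ∈ s, f a ∈ (Int.castAddHom ℝ).range) :
    #{a ∈ s | f a ∉ (Int.castAddHom ℝ).range} ≠ 1 := by
  intro h
  obtain ⟨a, ha⟩ := card_eq_one.1 h
  obtain ⟨has, hfa⟩ := mem_filter.1 (ha ▸ mem_singleton_self a)
  have hrest : ∑ b ∈ s.erase a, f b ∈ (Int.castAddHom ℝ).range := by
    refine AddSubgroup.sum_mem _ fun b hb => ?_
    by_contra hfb
    have : b ∈ ({a} : Finset α) := ha ▸ mem_filter.2 ⟨mem_of_mem_erase hb, hfb⟩
    exact ne_of_mem_erase hb (mem_singleton.1 this)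
  rw [← add_sum_erase s f has] at hs
  exact hfa (by simpa using sub_mem hs hrest)

lemma sum_filter_eq_zero_of_card_filter_eq_zero [Fintype α] {F : Finset α} {d : α → ℝ}
    (hd : ∀ a ∉ F, d a = 0) {p : α → Prop} [DecidablePred p] (h : #{a ∈ F | p a} = 0) :
    ∑ a with p a, d a = 0 := by
  refine sum_eq_zero fun a ha => hd a fun haF => ?_
  rw [card_eq_zero, filter_eq_empty_iff] at h
  exact h haF (mem_filter.1 ha).2

lemma card_filter_eq_one_le {s : Finset α} {y : α → ℝ} {c : ℕ} (hy : ∀ a, 0 ≤ y a)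
    (h : ∑ a ∈ s, y a ≤ c) : #{a ∈ s | y a = 1} ≤ c := by
  have : (#{a ∈ s | y a = 1} : ℝ) ≤ c :=
    calc (#{a ∈ s | y a = 1} : ℝ) = ∑ a ∈ s with y a = 1, y a := by
          rw [sum_congr rfl fun a ha => (mem_filter.1 ha).2]; simp
      _ ≤ ∑ a ∈ s, y a := sum_le_sum_of_subset_of_nonneg (filter_subset _ _) fun a _ _ => hy a
      _ ≤ c := h
  exact_mod_cast this

lemma eq_zero_or_eq_one_of_mem_range_intCast {r : ℝ} (hr : r ∈ (Int.castAddHom ℝ).range)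
    (h₀ : 0 ≤ r) (h₁ : r ≤ 1) : r = 0 ∨ r = 1 := by
  obtain ⟨z, rfl⟩ := hr
  simp only [Int.coe_castAddHom] at *
  have : 0 ≤ z ∧ z ≤ 1 := ⟨by exact_mod_cast h₀, by exact_mod_cast h₁⟩
  rcases (by omega : z = 0 ∨ z = 1) with rfl | rfl <;> simp

lemma sum_mul_eq_sum_filter_eq_one [Fintype α] {y : α → ℝ}
    (hy : ∀ a, y a = 0 ∨ y a = 1) (w : α → ℝ) : ∑ a, w a * y a = ∑ a with y a = 1, w a := by
  rw [sum_filter]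
  exact sum_congr rfl fun a _ => by rcases hy a with h | h <;> simp [h]

end Counting

section Balanced

variable {E ι κ : Type*} [Fintype E] [DecidableEq ι] [DecidableEq κ]
  (src : E → ι) (tgt : E → κ)

lemma exists_ne_zero_sum_fiber_eq_zero_of_card_lt {F : Finset E} {S : Finset ι} {T : Finset κ}
    (h : #S + #T < #F) :
    ∃ d : E → ℝ, d ≠ 0 ∧ (∀ e ∉ F, d e = 0) ∧
      (∀ i ∈ S, ∑ e with src e = i, d e = 0) ∧ ∀ j ∈ T, ∑ e with tgt e = j, d e = 0 := by
  classical
  let L : (E → ℝ) →ₗ[ℝ] (↥(univ \ F) → ℝ) × (↥S → ℝ) × (↥T → ℝ) :=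
    (LinearMap.pi fun e => LinearMap.proj e.1).prod
      ((LinearMap.pi fun i => ∑ e with src e = i.1, LinearMap.proj e).prod
        (LinearMap.pi fun j => ∑ e with tgt e = j.1, LinearMap.proj e))
  have hdim : Module.finrank ℝ ((↥(univ \ F) → ℝ) × (↥S → ℝ) × (↥T → ℝ)) <
      Module.finrank ℝ (E → ℝ) := by
    simp only [Module.finrank_prod, Module.finrank_fintype_fun_eq_card, Fintype.card_coe,
      card_sdiff_of_subset (subset_univ F), card_univ]
    have := card_le_univ F
    omega
  obtain ⟨d, hdL, hd⟩ :=
    Submodule.exists_mem_ne_zero_of_ne_bot (LinearMap.ker_ne_bot_of_finrank_lt (f := L) hdim)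
  rw [LinearMap.mem_ker] at hdL
  refine ⟨d, hd, fun e he => ?_, fun i hi => ?_, fun j hj => ?_⟩
  · simpa [L] using congrFun (congrArg Prod.fst hdL) ⟨e, by simpa using he⟩
  · simpa [L] using congrFun (congrArg (·.2.1) hdL) ⟨i, hi⟩
  · simpa [L] using congrFun (congrArg (·.2.2) hdL) ⟨j, hj⟩

lemma sum_fiber_eq_zero_of_forall_ne [Fintype ι] [Fintype κ] {d : E → ℝ} {i₀ : ι}
    (hrow : ∀ i ≠ i₀, ∑ e with src e = i, d e = 0) (hcol : ∀ j, ∑ e with tgt e = j, d e = 0) :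
    ∑ e with src e = i₀, d e = 0 :=
  calc ∑ e with src e = i₀, d e = ∑ i, ∑ e with src e = i, d e :=
        (Fintype.sum_eq_single _ hrow).symm
    _ = ∑ j, ∑ e with tgt e = j, d e := by rw [sum_fiberwise, sum_fiberwise]
    _ = 0 := sum_eq_zero fun j _ => hcol j

-- The two families of fiber sums both add up to `∑ e, d e`, so one constraint is redundant.
lemma exists_ne_zero_sum_fiber_eq_zero_of_forall_card_ne_one [Fintype ι] [Fintype κ]
    {F : Finset E} (hF : F.Nonempty) (hsrc : ∀ i, #{e ∈ F | src e = i} ≠ 1)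
    (htgt : ∀ j, #{e ∈ F | tgt e = j} ≠ 1) :
    ∃ d : E → ℝ, d ≠ 0 ∧ (∀ e ∉ F, d e = 0) ∧
      (∀ i, ∑ e with src e = i, d e = 0) ∧ ∀ j, ∑ e with tgt e = j, d e = 0 := by
  set S : Finset ι := {i | 2 ≤ #{e ∈ F | src e = i}}
  set T : Finset κ := {j | 2 ≤ #{e ∈ F | tgt e = j}}
  have hS : 2 * #S ≤ #F := (Nat.le_add_right _ _).trans
    (two_mul_card_two_le_fibers_add_card_singleton_fibers_le F src)
  have hT : 2 * #T ≤ #F := (Nat.le_add_right _ _).trans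
    (two_mul_card_two_le_fibers_add_card_singleton_fibers_le F tgt)
  obtain ⟨e₀, he₀⟩ := hF
  have hi₀ : src e₀ ∈ S := by
    have : 0 < #{e ∈ F | src e = src e₀} := card_pos.2 ⟨e₀, by simp [he₀]⟩
    have := hsrc (src e₀)
    simp only [S, mem_filter, mem_univ, true_and]
    omega
  have : 0 < #S := card_pos.2 ⟨_, hi₀⟩
  obtain ⟨d, hd, hdF, hdS, hdT⟩ := exists_ne_zero_sum_fiber_eq_zero_of_card_lt src tgt
    (F := F) (S := S.erase (src e₀)) (T := T) (by rw [card_erase_of_mem hi₀]; omega)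
  have hrow : ∀ i ≠ src e₀, ∑ e with src e = i, d e = 0 := fun i hi => by
    by_cases hiS : i ∈ S
    · exact hdS i (mem_erase.2 ⟨hi, hiS⟩)
    · have := hsrc i
      simp only [S, mem_filter, mem_univ, true_and] at hiS
      exact sum_filter_eq_zero_of_card_filter_eq_zero hdF (by omega)
  have hcol : ∀ j, ∑ e with tgt e = j, d e = 0 := fun j => by
    by_cases hjT : j ∈ T
    · exact hdT j hjT
    · have := htgt j
      simp only [T, mem_filter, mem_univ, true_and] at hjT
      exact sum_filter_eq_zero_of_card_filter_eq_zero hdF (by omega)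
  refine ⟨d, hd, hdF, fun i => ?_, hcol⟩
  by_cases hi : i = src e₀
  · exact hi ▸ sum_fiber_eq_zero_of_forall_ne src tgt hrow hcol
  · exact hrow i hi

lemma exists_ne_zero_sum_fiber_eq_zero [Fintype ι] [Fintype κ] {F : Finset E}
    (hF : F.Nonempty) :
    ∃ d : E → ℝ, d ≠ 0 ∧ (∀ e ∉ F, d e = 0) ∧
      (∀ i, #{e ∈ F | src e = i} ≠ 1 → ∑ e with src e = i, d e = 0) ∧
      ∀ j, #{e ∈ F | tgt e = j} ≠ 1 → ∑ e with tgt e = j, d e = 0 := by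
  by_cases hsingle : (∀ i, #{e ∈ F | src e = i} ≠ 1) ∧ ∀ j, #{e ∈ F | tgt e = j} ≠ 1
  · obtain ⟨d, hd, hdF, hdS, hdT⟩ :=
      exists_ne_zero_sum_fiber_eq_zero_of_forall_card_ne_one src tgt hF hsingle.1 hsingle.2
    exact ⟨d, hd, hdF, fun i _ => hdS i, fun j _ => hdT j⟩
  set S : Finset ι := {i | 2 ≤ #{e ∈ F | src e = i}}
  set T : Finset κ := {j | 2 ≤ #{e ∈ F | tgt e = j}}
  have hS : 2 * #S + #{i | #{e ∈ F | src e = i} = 1} ≤ #F :=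
    two_mul_card_two_le_fibers_add_card_singleton_fibers_le F src
  have hT : 2 * #T + #{j | #{e ∈ F | tgt e = j} = 1} ≤ #F :=
    two_mul_card_two_le_fibers_add_card_singleton_fibers_le F tgt
  have : 0 < #{i | #{e ∈ F | src e = i} = 1} + #{j | #{e ∈ F | tgt e = j} = 1} := by
    simp only [not_and_or, not_forall, not_not] at hsingle
    rcases hsingle with ⟨i, hi⟩ | ⟨j, hj⟩
    · have : 0 < #{i | #{e ∈ F | src e = i} = 1} := card_pos.2 ⟨i, by simpa using hi⟩
      omega
    · have : 0 < #{j | #{e ∈ F | tgt e = j} = 1} := card_pos.2 ⟨j, by simpa using hj⟩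
      omega
  obtain ⟨d, hd, hdF, hdS, hdT⟩ :=
    exists_ne_zero_sum_fiber_eq_zero_of_card_lt src tgt (F := F) (S := S) (T := T) (by omega)
  refine ⟨d, hd, hdF, fun i hi => ?_, fun j hj => ?_⟩
  · by_cases h2 : 2 ≤ #{e ∈ F | src e = i}
    · exact hdS i (by simpa [S] using h2)
    · exact sum_filter_eq_zero_of_card_filter_eq_zero hdF (by omega)
  · by_cases h2 : 2 ≤ #{e ∈ F | tgt e = j}
    · exact hdT j (by simpa [T] using h2)
    · exact sum_filter_eq_zero_of_card_filter_eq_zero hdF (by omega)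

end Balanced

lemma eventually_add_mul_le {c s B : ℝ} (hc : c ≤ B) (hs : c = B → s = 0) :
    ∀ᶠ ε in 𝓝 (0 : ℝ), c + ε * s ≤ B := by
  rcases hc.lt_or_eq with hlt | heq
  · have : Tendsto (fun ε : ℝ => c + ε * s) (𝓝 0) (𝓝 c) := by
      simpa using (tendsto_const_nhds (x := c)).add ((tendsto_id (x := 𝓝 (0 : ℝ))).mul_const s)
    exact (this.eventually (eventually_lt_nhds hlt)).mono fun _ => le_of_lt
  · exact .of_forall fun ε => by simp [hs heq, heq]

lemma notMem_extremePoints_of_eventually_add_smul_mem {V : Type*} [AddCommGroup V]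
    [Module ℝ V] {A : Set V} {x d : V} (hd : d ≠ 0) (h : ∀ᶠ ε in 𝓝 (0 : ℝ), x + ε • d ∈ A) :
    x ∉ A.extremePoints ℝ := by
  have hneg : ∀ᶠ ε in 𝓝 (0 : ℝ), x + (-ε) • d ∈ A :=
    (continuous_neg.tendsto' 0 0 neg_zero).eventually h
  obtain ⟨ε, ⟨h₁, h₂⟩, hε⟩ :=
    (((h.and hneg).filter_mono nhdsWithin_le_nhds).and self_mem_nhdsWithin).exists
      (f := 𝓝[≠] (0 : ℝ))
  intro hx
  have hmid : x ∈ openSegment ℝ (x + ε • d) (x + (-ε) • d) :=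
    ⟨1 / 2, 1 / 2, by norm_num, by norm_num, by norm_num, by module⟩
  have := ((mem_extremePoints.1 hx).2 _ h₁ _ h₂ hmid).1
  exact smul_ne_zero hε hd (by simpa using this)

lemma exists_mem_extremePoints_le {V : Type*} [AddCommGroup V] [Module ℝ V]
    [TopologicalSpace V] [T2Space V] [IsTopologicalAddGroup V] [ContinuousSMul ℝ V]
    [LocallyConvexSpace ℝ V] {A : Set V} (hA : IsCompact A) (l : StrongDual ℝ V) {x : V}
    (hx : x ∈ A) : ∃ y ∈ A.extremePoints ℝ, l x ≤ l y := by
  obtain ⟨z, hzA, hz⟩ := hA.exists_isMaxOn ⟨x, hx⟩ l.continuous.continuousOn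
  have hexp : IsExposed ℝ A (l.toExposed A) := ContinuousLinearMap.toExposed.isExposed
  obtain ⟨y, hy⟩ := (hexp.isCompact hA).extremePoints_nonempty ⟨z, hzA, hz⟩
  exact ⟨y, hexp.isExtreme.extremePoints_subset_extremePoints hy, hy.1.2 x hx⟩

section Polytope

variable {E ι κ : Type*} [Fintype E] [DecidableEq ι] [DecidableEq κ]

/-- Fractional b-matchings of the bipartite multigraph whose edge `e` joins `src e` to `tgt e`. -/
def bMatchingPolytope (src : E → ι) (tgt : E → κ) (a : ι → ℕ) (b : κ → ℕ) : Set (E → ℝ) :=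
  {x | (∀ e, 0 ≤ x e) ∧ (∀ i, ∑ e with src e = i, x e ≤ a i) ∧
    ∀ j, ∑ e with tgt e = j, x e ≤ b j}

variable {src : E → ι} {tgt : E → κ} {a : ι → ℕ} {b : κ → ℕ} {x : E → ℝ}

lemma le_of_mem_bMatchingPolytope (hx : x ∈ bMatchingPolytope src tgt a b) (e : E) :
    x e ≤ a (src e) :=
  (single_le_sum (fun e' _ => hx.1 e') (by simp)).trans (hx.2.1 (src e))

lemma isCompact_bMatchingPolytope : IsCompact (bMatchingPolytope src tgt a b) := by
  have hclosed : IsClosed (bMatchingPolytope src tgt a b) := by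
    have hsum : ∀ p : E → Prop, [DecidablePred p] →
        Continuous fun x : E → ℝ => ∑ e with p e, x e :=
      fun p _ => continuous_finsetSum _ fun e _ => continuous_apply e
    simp only [bMatchingPolytope, Set.ofPred_and, Set.ofPred_forall]
    exact (isClosed_iInter fun e => isClosed_le continuous_const (continuous_apply e)).inter
      ((isClosed_iInter fun i => isClosed_le (hsum _) continuous_const).inter
        (isClosed_iInter fun j => isClosed_le (hsum _) continuous_const))
  refine (isCompact_univ_pi fun e => isCompact_Icc (a := 0) (b := (a (src e) : ℝ)))
    |>.of_isClosed_subset hclosed fun x hx e _ => ⟨hx.1 e, le_of_mem_bMatchingPolytope hx e⟩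

lemma eventually_add_smul_mem_bMatchingPolytope [Finite ι] [Finite κ]
    (hx : x ∈ bMatchingPolytope src tgt a b) {d : E → ℝ} (hpos : ∀ e, d e ≠ 0 → 0 < x e)
    (hsrc : ∀ i, ∑ e with src e = i, x e = a i → ∑ e with src e = i, d e = 0)
    (htgt : ∀ j, ∑ e with tgt e = j, x e = b j → ∑ e with tgt e = j, d e = 0) :
    ∀ᶠ ε in 𝓝 (0 : ℝ), x + ε • d ∈ bMatchingPolytope src tgt a b := by
  have hnonneg : ∀ e, ∀ᶠ ε in 𝓝 (0 : ℝ), -x e + ε * -d e ≤ 0 := fun e =>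
    eventually_add_mul_le (by linarith [hx.1 e]) fun h => by
      by_contra hd
      linarith [hpos e (neg_ne_zero.1 hd)]
  have hrow : ∀ i, ∀ᶠ ε in 𝓝 (0 : ℝ),
      ∑ e with src e = i, x e + ε * ∑ e with src e = i, d e ≤ a i :=
    fun i => eventually_add_mul_le (hx.2.1 i) (hsrc i)
  have hcol : ∀ j, ∀ᶠ ε in 𝓝 (0 : ℝ),
      ∑ e with tgt e = j, x e + ε * ∑ e with tgt e = j, d e ≤ b j :=
    fun j => eventually_add_mul_le (hx.2.2 j) (htgt j)
  filter_upwards [eventually_all.2 hnonneg, eventually_all.2 hrow, eventually_all.2 hcol]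
    with ε h₀ h₁ h₂
  refine ⟨fun e => ?_, fun i => ?_, fun j => ?_⟩
  · simp only [Pi.add_apply, Pi.smul_apply, smul_eq_mul]
    linarith [h₀ e]
  · simpa [sum_add_distrib, mul_sum] using h₁ i
  · simpa [sum_add_distrib, mul_sum] using h₂ j

end Polytope

section Extreme

variable {E ι κ : Type*} [Fintype E] [Fintype ι] [Fintype κ] [DecidableEq ι] [DecidableEq κ]
  {src : E → ι} {tgt : E → κ} {a : ι → ℕ} {b : κ → ℕ} {x : E → ℝ}

theorem mem_range_intCast_of_mem_extremePoints
    (hx : x ∈ (bMatchingPolytope src tgt a b).extremePoints ℝ) (e : E) :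
    x e ∈ (Int.castAddHom ℝ).range := by
  classical
  by_contra he
  set F : Finset E := {e | x e ∉ (Int.castAddHom ℝ).range}
  have hfiber : ∀ (p : E → Prop) [DecidablePred p] (n : ℕ), ∑ e with p e, x e = n →
      #{e ∈ F | p e} ≠ 1 := fun p _ n hn => by
    rw [filter_comm]
    exact card_filter_notMem_range_intCast_ne_one (hn ▸ ⟨n, by simp⟩)
  obtain ⟨d, hd, hdF, hdsrc, hdtgt⟩ :=
    exists_ne_zero_sum_fiber_eq_zero src tgt (F := F) ⟨e, by simpa [F] using he⟩
  refine notMem_extremePoints_of_eventually_add_smul_mem hd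
    (eventually_add_smul_mem_bMatchingPolytope hx.1 (fun e' he' => ?_)
      (fun i hi => hdsrc i (hfiber _ _ hi)) (fun j hj => hdtgt j (hfiber _ _ hj))) hx
  have hx0 : x e' ≠ 0 := fun h0 => by
    have : e' ∈ F := by_contra fun h => he' (hdF e' h)
    simp [F, h0] at this
  exact (hx.1.1 e').lt_of_ne' hx0

end Extreme

section Matching

variable {n m : ℕ} {k : Fin m → ℕ}

lemma IsMatching.mono {S T : Finset (Fin n × Fin m)} (hT : IsMatching n m k T) (hST : S ⊆ T) :
    IsMatching n m k S :=
  ⟨fun i => (card_le_card (filter_subset_filter _ hST)).trans (hT.1 i),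
    fun j => (card_le_card (filter_subset_filter _ hST)).trans (hT.2 j)⟩

lemma matchRank_le {S : Finset (Fin n × Fin m)} {c : ℕ}
    (h : ∀ M ⊆ S, IsMatching n m k M → #M ≤ c) : matchRank n m k S ≤ c :=
  csSup_le ⟨0, ∅, empty_subset S, ⟨by simp, by simp⟩, card_empty⟩
    fun _ ⟨M, hMS, hM, hc⟩ => hc ▸ h M hMS hM

lemma mem_bMatchingPolytope_of_sum_le_matchRank {q : Fin n × Fin m → ℝ} (hq : ∀ e, 0 ≤ q e)
    (hfeas : ∀ S : Finset (Fin n × Fin m), ∑ e ∈ S, q e ≤ (matchRank n m k S : ℝ)) :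
    q ∈ bMatchingPolytope Prod.fst Prod.snd (fun _ => 1) k := by
  refine ⟨hq, fun i => (hfeas _).trans ?_, fun j => (hfeas _).trans ?_⟩
  · exact_mod_cast matchRank_le fun M hMS hM => by
      rw [← filter_true_of_mem fun e he => (mem_filter.1 (hMS he)).2]
      exact hM.1 i
  · exact_mod_cast matchRank_le fun M hMS hM => by
      rw [← filter_true_of_mem fun e he => (mem_filter.1 (hMS he)).2]
      exact hM.2 j

lemma isMatching_filter_eq_one {y : Fin n × Fin m → ℝ}
    (hy : y ∈ bMatchingPolytope Prod.fst Prod.snd (fun _ => 1) k) :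
    IsMatching n m k {e | y e = 1} :=
  ⟨fun i => by rw [filter_comm]; exact card_filter_eq_one_le hy.1 (hy.2.1 i),
    fun j => by rw [filter_comm]; exact card_filter_eq_one_le hy.1 (hy.2.2 j)⟩

end Matching

theorem fractional_matching_value_bound_general
    (n m : ℕ) (k : Fin m → ℕ)
    (q : Fin n × Fin m → ℝ) (hq : ∀ e, 0 ≤ q e)
    (hfeas : ∀ S : Finset (Fin n × Fin m), ∑ e ∈ S, q e ≤ (matchRank n m k S : ℝ))
    (v : Fin n × Fin m → ℝ)
    (A1 : Finset (Fin n × Fin m)) :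
    ∃ M : Finset (Fin n × Fin m), IsMatching n m k M ∧ Disjoint M A1 ∧
      ∑ e ∈ Finset.univ \ A1, q e * v e ≤ ∑ e ∈ M, v e := by
  set w : Fin n × Fin m → ℝ := fun e => if e ∈ A1 then 0 else v e
  obtain ⟨y, hy, hwy⟩ := exists_mem_extremePoints_le isCompact_bMatchingPolytope
    (∑ e, w e • ContinuousLinearMap.proj e) (mem_bMatchingPolytope_of_sum_le_matchRank hq hfeas)
  have hy01 : ∀ e, y e = 0 ∨ y e = 1 := fun e =>
    eq_zero_or_eq_one_of_mem_range_intCast (mem_range_intCast_of_mem_extremePoints hy e)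
      (hy.1.1 e) (by simpa using le_of_mem_bMatchingPolytope hy.1 e)
  refine ⟨({e | y e = 1} : Finset _) \ A1, (isMatching_filter_eq_one hy.1).mono sdiff_subset,
    sdiff_disjoint, ?_⟩
  simp only [FunLike.coe_sum, Finset.sum_apply, FunLike.coe_smul,
    Pi.smul_apply, ContinuousLinearMap.proj_apply, smul_eq_mul] at hwy
  calc ∑ e ∈ univ \ A1, q e * v e = ∑ e, w e * q e := by
        rw [sdiff_eq_filter, sum_filter]
        exact sum_congr rfl fun e _ => by by_cases he : e ∈ A1 <;> simp [w, he, mul_comm]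
    _ ≤ ∑ e, w e * y e := hwy
    _ = ∑ e ∈ ({e | y e = 1} : Finset _) \ A1, v e := by
        rw [sum_mul_eq_sum_filter_eq_one hy01, sdiff_eq_filter, sum_filter (· ∉ A1)]
        exact sum_congr rfl fun e _ => by by_cases he : e ∈ A1 <;> simp [w, he]

/-- If `q ≥ 0` satisfies `∑_{e ∈ S} q e ≤ r S` for every `S`,
then for every `v ≥ 0` and every matching `A1`, the weighted sum
`∑_{e ∉ A1} q e · v e` is at most the maximum `v`-value of a matching disjoint
from `A1`. -/
theorem fractional_matching_value_bound
    (n m : ℕ) (k : Fin m → ℕ) (hk : ∀ j, 1 ≤ k j)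
    (q : Fin n × Fin m → ℝ) (hq : ∀ e, 0 ≤ q e)
    (hfeas : ∀ S : Finset (Fin n × Fin m), ∑ e ∈ S, q e ≤ (matchRank n m k S : ℝ))
    (v : Fin n × Fin m → ℝ) (hv : ∀ e, 0 ≤ v e)
    (A1 : Finset (Fin n × Fin m)) (hA1 : IsMatching n m k A1) :
    ∃ M : Finset (Fin n × Fin m), IsMatching n m k M ∧ Disjoint M A1 ∧
      ∑ e ∈ Finset.univ \ A1, q e * v e ≤ ∑ e ∈ M, v e :=
  fractional_matching_value_bound_general n m k q hq hfeas v A1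
end

section
/- Let F_1, …, F_m be Borel probability distributions on ℝ_{≥0} with finite mean and let μ be their product distribution on ℝ_{≥0}^m. Then the optimal item-pricing revenue under μ is at least one half of the expected revenue of every dominant-strategy incentive compatible, individually rational deterministic single-item auction for m independent bidders with values v_j distributed according to F_j. -/
/-!
Fix `t ≥ 0` and write `e_j(t) = sup_{p ≥ t} (p - t) P[v_j ≥ p]` (`excessRevenue (F j) t`).
In a truthful auction, against fixed opponents, bidder `j` pays the same price `c` whenever he
wins, and `c` is at most his value. Splitting `c` into `t` plus the excess `c - t`, whose
expectation over `v_j` is at most `e_j(t)`, gives `Rev ≤ t + ∑_j e_j(t)`; with `t = Rev / 2`,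
`∑_j e_j(t) ≥ t`. Now post prices `p_j ≥ t` nearly attaining each `e_j(t)`, and let `B` be the
probability that no item is affordable. Every sale earns at least `t`, and with probability at
least `P[v_j ≥ p_j] · B` item `j` is the only affordable one and earns `p_j`, so item pricing
earns at least `t (1 - B) + B ∑_j (p_j - t) P[v_j ≥ p_j] ≥ t (1 - B) + B (t - ε) ≥ t - ε`.
-/

open MeasureTheory

/-- A lottery over `m` items: allocation probabilities `q` with `q j ≥ 0`,
`∑ j, q j ≤ 1`, and a price `p ≥ 0`. -/
structure Lottery (m : ℕ) where
  q : Fin m → ℝ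
  p : ℝ
  q_nonneg : ∀ j, 0 ≤ q j
  q_sum_le_one : ∑ j, q j ≤ 1
  p_nonneg : 0 ≤ p

/-- The (expected) utility of lottery `ℓ` at valuation `v`. -/
def Lottery.util {m : ℕ} (ℓ : Lottery m) (v : Fin m → ℝ) : ℝ :=
  (∑ j, ℓ.q j * v j) - ℓ.p

/-- The probability vector of a possibly-absent lottery (`⊥` ↦ 0). -/
def selQ {m : ℕ} : Option (Lottery m) → Fin m → ℝ
  | some ℓ => ℓ.q
  | none => 0

/-- The price of a possibly-absent lottery (`⊥` ↦ 0). -/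
def selP {m : ℕ} : Option (Lottery m) → ℝ
  | some ℓ => ℓ.p
  | none => 0

/-- `s` is a utility-maximizing selection for the lottery menu `L`. -/
structure IsSelection {m : ℕ} (L : Set (Lottery m))
    (s : (Fin m → ℝ) → Option (Lottery m)) : Prop where
  measQ : ∀ j, Measurable fun v => selQ (s v) j
  measP : Measurable fun v => selP (s v)
  buy_opt : ∀ v : Fin m → ℝ, (∀ j, 0 ≤ v j) → ∀ ℓ : Lottery m, s v = some ℓ →
    ℓ ∈ L ∧ 0 ≤ ℓ.util v ∧ ∀ ℓ' ∈ L, ℓ'.util v ≤ ℓ.util v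
  no_buy : ∀ v : Fin m → ℝ, (∀ j, 0 ≤ v j) → s v = none →
    ∀ ℓ ∈ L, ℓ.util v ≤ 0

/-- Expected revenue of a selection under the valuation distribution `μ`. -/
noncomputable def lotteryRevenue {m : ℕ} (μ : Measure (Fin m → ℝ))
    (s : (Fin m → ℝ) → Option (Lottery m)) : ℝ :=
  ∫ v, selP (s v) ∂μ

/-- An item pricing: every lottery in the menu allocates some item
deterministically (its probability vector is a standard basis vector). -/
def IsItemPricing {m : ℕ} (L : Set (Lottery m)) : Prop :=
  ∀ ℓ ∈ L, ∃ j : Fin m, ℓ.q = fun j' => if j' = j then 1 else 0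

/-- The optimal item-pricing revenue under `μ`. -/
noncomputable def optItemPricingRev {m : ℕ} (μ : Measure (Fin m → ℝ)) : ℝ :=
  sSup {r : ℝ | ∃ (L : Set (Lottery m)) (s : (Fin m → ℝ) → Option (Lottery m)),
    L.Nonempty ∧ IsItemPricing L ∧ IsSelection L s ∧ r = lotteryRevenue μ s}

/-- The optimal lottery revenue under `μ`. -/
noncomputable def optLotteryRev {m : ℕ} (μ : Measure (Fin m → ℝ)) : ℝ :=
  sSup {r : ℝ | ∃ (L : Set (Lottery m)) (s : (Fin m → ℝ) → Option (Lottery m)),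
    L.Nonempty ∧ IsSelection L s ∧ r = lotteryRevenue μ s}

/-- A dominant-strategy incentive compatible, individually rational
deterministic single-item auction for `m` bidders: `x v = some j` means bidder
`j` wins, `x v = none` means no winner; `pay v j ≥ 0` is bidder `j`'s payment. -/
structure IsAuction {m : ℕ} (x : (Fin m → ℝ) → Option (Fin m))
    (pay : (Fin m → ℝ) → Fin m → ℝ) : Prop where
  measX : ∀ j : Fin m, MeasurableSet {v | x v = some j}
  measPay : ∀ j : Fin m, Measurable fun v => pay v j
  pay_nonneg : ∀ v j, 0 ≤ pay v j
  ic : ∀ v : Fin m → ℝ, (∀ j, 0 ≤ v j) → ∀ (j : Fin m) (v' : ℝ), 0 ≤ v' →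
    (if x (Function.update v j v') = some j then v j else 0)
        - pay (Function.update v j v') j
      ≤ (if x v = some j then v j else 0) - pay v j
  ir : ∀ v : Fin m → ℝ, (∀ j, 0 ≤ v j) → ∀ j : Fin m,
    0 ≤ (if x v = some j then v j else 0) - pay v j

/-- Expected revenue of a single-item auction under `μ`. -/
noncomputable def auctionRevenue {m : ℕ} (μ : Measure (Fin m → ℝ))
    (pay : (Fin m → ℝ) → Fin m → ℝ) : ℝ :=
  ∫ v, ∑ j, pay v j ∂μ

open Set Function
open scoped ENNReal

section FirstArgmax

variable {ι : Type*} [Fintype ι] [LinearOrder ι] [Nonempty ι]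

noncomputable def firstArgmax (u : ι → ℝ) : ι :=
  (Finset.univ.filter fun i => ∀ k, u k ≤ u i).min' <| by
    obtain ⟨i, hi⟩ := Finite.exists_max u
    exact ⟨i, Finset.mem_filter.2 ⟨Finset.mem_univ i, hi⟩⟩

theorem le_apply_firstArgmax (u : ι → ℝ) (k : ι) : u k ≤ u (firstArgmax u) :=
  (Finset.mem_filter.1 (Finset.min'_mem (Finset.univ.filter fun i => ∀ k, u k ≤ u i) _)).2 k

theorem firstArgmax_le {u : ι → ℝ} {i : ι} (hi : ∀ k, u k ≤ u i) : firstArgmax u ≤ i :=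
  Finset.min'_le _ i (Finset.mem_filter.2 ⟨Finset.mem_univ i, hi⟩)

theorem firstArgmax_eq_iff {u : ι → ℝ} {j : ι} :
    firstArgmax u = j ↔ (∀ k, u k ≤ u j) ∧ ∀ k < j, u k < u j := by
  constructor
  · rintro rfl
    refine ⟨le_apply_firstArgmax u, fun k hk => lt_of_not_ge fun hle => ?_⟩
    exact hk.not_ge (firstArgmax_le fun k' => (le_apply_firstArgmax u k').trans hle)
  · rintro ⟨hmax, hfirst⟩
    refine le_antisymm (firstArgmax_le hmax) (le_of_not_gt fun hlt => ?_)
    exact (hfirst _ hlt).not_ge (le_apply_firstArgmax u j)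

theorem measurable_firstArgmax [MeasurableSpace ι] [MeasurableSingletonClass ι] {α : Type*}
    [MeasurableSpace α] {f : α → ι → ℝ} (hf : ∀ i, Measurable fun a => f a i) :
    Measurable fun a => firstArgmax (f a) := by
  refine measurable_to_countable' fun j => ?_
  have : (fun a => firstArgmax (f a)) ⁻¹' {j} =
      (⋂ k, {a | f a k ≤ f a j}) ∩ ⋂ k, ⋂ (_ : k < j), {a | f a k < f a j} := by
    ext a
    simp [firstArgmax_eq_iff]
  rw [this]
  exact .inter (.iInter fun k => measurableSet_le (hf k) (hf j))
    (.iInter fun k => .iInter fun _ => measurableSet_lt (hf k) (hf j))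

end FirstArgmax

section ExcessRevenue

noncomputable def excessRevenue (ν : Measure ℝ) (t : ℝ) : ℝ :=
  ⨆ p : Ici t, ((p : ℝ) - t) * ν.real (Ici (p : ℝ))

theorem exists_lt_excessRevenue (ν : Measure ℝ) (t : ℝ) {ε : ℝ} (hε : 0 < ε) :
    ∃ p, t ≤ p ∧ excessRevenue ν t - ε < (p - t) * ν.real (Ici p) := by
  obtain ⟨⟨p, hp⟩, hlt⟩ := exists_lt_of_lt_ciSup (sub_lt_self (excessRevenue ν t) hε)
  exact ⟨p, hp, hlt⟩

theorem exists_sum_excessRevenue_sub_le {ι : Type*} [Fintype ι] (ν : ι → Measure ℝ) (t : ℝ)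
    {ε : ℝ} (hε : 0 < ε) :
    ∃ p : ι → ℝ, (∀ i, t ≤ p i) ∧
      ∑ i, excessRevenue (ν i) t - ε ≤ ∑ i, (p i - t) * (ν i).real (Ici (p i)) := by
  set δ := ε / (Fintype.card ι + 1)
  have hδ : 0 < δ := by positivity
  choose p hpt hp using fun i => exists_lt_excessRevenue (ν i) t hδ
  refine ⟨p, hpt, ?_⟩
  have hcard : Fintype.card ι * δ ≤ ε := by
    rw [mul_div_assoc', div_le_iff₀ (by positivity)]
    nlinarith
  calc ∑ i, excessRevenue (ν i) t - ε ≤ ∑ i, (excessRevenue (ν i) t - δ) := by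
        rw [Finset.sum_sub_distrib, Finset.sum_const, Finset.card_univ, nsmul_eq_mul]
        linarith
    _ ≤ _ := Finset.sum_le_sum fun i _ => (hp i).le

variable {ν : Measure ℝ} [IsFiniteMeasure ν] {t : ℝ}

theorem bddAbove_excessRevenue (hν : Integrable id ν) (ht : 0 ≤ t) :
    BddAbove (range fun p : Ici t => ((p : ℝ) - t) * ν.real (Ici (p : ℝ))) := by
  refine ⟨∫ x, |x| ∂ν, ?_⟩
  rintro _ ⟨⟨p, hp : t ≤ p⟩, rfl⟩
  calc (p - t) * ν.real (Ici p) ≤ p * ν.real {x | p ≤ |x|} := by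
        have hsub : Ici p ⊆ {x | p ≤ |x|} := fun x (hx : p ≤ x) => hx.trans (le_abs_self x)
        gcongr
        · linarith
        · linarith
        · finiteness
    _ ≤ ∫ x, |x| ∂ν :=
        mul_meas_ge_le_integral_of_nonneg (ae_of_all _ fun x => abs_nonneg x) hν.abs p

theorem sub_mul_le_excessRevenue (hν : Integrable id ν) (ht : 0 ≤ t) {c : ℝ} (hc : t ≤ c) :
    (c - t) * ν.real (Ici c) ≤ excessRevenue ν t :=
  le_ciSup (f := fun p : Ici t => ((p : ℝ) - t) * ν.real (Ici (p : ℝ)))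
    (bddAbove_excessRevenue hν ht) ⟨c, hc⟩

theorem excessRevenue_nonneg (hν : Integrable id ν) (ht : 0 ≤ t) : 0 ≤ excessRevenue ν t := by
  simpa using sub_mul_le_excessRevenue hν ht le_rfl

theorem ofReal_sub_mul_le_excessRevenue (hν : Integrable id ν) (ht : 0 ≤ t) (c : ℝ) :
    ENNReal.ofReal (c - t) * ν (Ici c) ≤ ENNReal.ofReal (excessRevenue ν t) := by
  rcases le_or_gt t c with htc | hct
  · rw [← ofReal_measureReal, ← ENNReal.ofReal_mul (sub_nonneg.2 htc)]
    exact ENNReal.ofReal_le_ofReal (sub_mul_le_excessRevenue hν ht htc)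
  · simp [ENNReal.ofReal_eq_zero.2 (sub_nonpos.2 hct.le)]

theorem lintegral_le_add_excessRevenue (hν : Integrable id ν) (ht : 0 ≤ t) {c : ℝ} {W : Set ℝ}
    (hW : W ⊆ Ici c) {g : ℝ → ℝ≥0∞} (hg : ∀ w, g w ≤ W.indicator (fun _ => ENNReal.ofReal c) w) :
    ∫⁻ w, g w ∂ν ≤ ENNReal.ofReal t * ν W + ENNReal.ofReal (excessRevenue ν t) := by
  have hc : ENNReal.ofReal c ≤ ENNReal.ofReal t + ENNReal.ofReal (c - t) := by
    simpa using ENNReal.ofReal_add_le (p := t) (q := c - t)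
  calc ∫⁻ w, g w ∂ν ≤ ∫⁻ w, W.indicator (fun _ => ENNReal.ofReal c) w ∂ν := lintegral_mono hg
    _ ≤ ENNReal.ofReal c * ν W := lintegral_indicator_const_le _ _
    _ ≤ ENNReal.ofReal t * ν W + ENNReal.ofReal (c - t) * ν (Ici c) := by
        grw [hc, add_mul]
        gcongr
    _ ≤ ENNReal.ofReal t * ν W + ENNReal.ofReal (excessRevenue ν t) := by
        grw [ofReal_sub_mul_le_excessRevenue hν ht c]

end ExcessRevenue

theorem ae_nonneg_pi {ι : Type*} [Fintype ι] {F : ι → Measure ℝ} [∀ i, IsProbabilityMeasure (F i)]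
    (hF : ∀ i, F i (Iio 0) = 0) : ∀ᵐ v ∂Measure.pi F, 0 ≤ v := by
  refine ae_all_iff.2 fun i => (measurePreserving_eval F i).quasiMeasurePreserving.ae ?_
  exact measure_eq_zero_iff_ae_notMem.1 (hF i) |>.mono fun _ hx => not_lt.1 hx

theorem integrable_eval_pi {ι : Type*} [Fintype ι] {F : ι → Measure ℝ}
    [∀ i, IsProbabilityMeasure (F i)] (hF : ∀ i, Integrable id (F i)) (i : ι) :
    Integrable (fun v => v i) (Measure.pi F) :=
  (measurePreserving_eval F i).integrable_comp_of_integrable (hF i)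

theorem measureReal_pi_univ_pi {ι : Type*} [Fintype ι] {α : ι → Type*}
    [∀ i, MeasurableSpace (α i)] (μ : ∀ i, Measure (α i)) [∀ i, SigmaFinite (μ i)]
    (s : ∀ i, Set (α i)) : (Measure.pi μ).real (univ.pi s) = ∏ i, (μ i).real (s i) := by
  simp only [measureReal_def, Measure.pi_pi, ENNReal.toReal_prod]

namespace IsAuction

variable {m : ℕ} {x : (Fin m → ℝ) → Option (Fin m)} {pay : (Fin m → ℝ) → Fin m → ℝ}
  (h : IsAuction x pay)
include h

theorem pay_eq_zero_of_ne {v : Fin m → ℝ} (hv : 0 ≤ v) {j : Fin m} (hx : x v ≠ some j) :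
    pay v j = 0 := by
  have := h.ir v hv j
  rw [if_neg hx] at this
  linarith [h.pay_nonneg v j]

theorem pay_le_of_eq {v : Fin m → ℝ} (hv : 0 ≤ v) {j : Fin m} (hx : x v = some j) :
    pay v j ≤ v j := by
  have := h.ir v hv j
  rw [if_pos hx] at this
  linarith

theorem pay_update_eq {v : Fin m → ℝ} {j : Fin m} {w w' : ℝ} (hw : 0 ≤ update v j w)
    (hw' : 0 ≤ update v j w') (hx : x (update v j w) = some j)
    (hx' : x (update v j w') = some j) : pay (update v j w) j = pay (update v j w') j := by
  have h₁ := h.ic _ hw j w' (by simpa using hw' j)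
  have h₂ := h.ic _ hw' j w (by simpa using hw j)
  simp only [update_idem, update_self, hx, hx', if_true] at h₁ h₂
  linarith

theorem exists_threshold (v : Fin m → ℝ) (j : Fin m) :
    ∃ c, ∀ w, 0 ≤ update v j w → x (update v j w) = some j →
      pay (update v j w) j = c ∧ c ≤ w := by
  by_cases hwin : ∃ w₀, 0 ≤ update v j w₀ ∧ x (update v j w₀) = some j
  · obtain ⟨w₀, hw₀, hx₀⟩ := hwin
    refine ⟨pay (update v j w₀) j, fun w hw hx => ⟨h.pay_update_eq hw hw₀ hx hx₀, ?_⟩⟩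
    rw [← h.pay_update_eq hw hw₀ hx hx₀]
    simpa using h.pay_le_of_eq hw hx
  · push Not at hwin
    exact ⟨0, fun w hw hx => absurd hx (hwin w hw)⟩

theorem lintegral_update_pay_le {ν : Measure ℝ} [IsFiniteMeasure ν] (hν : Integrable id ν)
    {t : ℝ} (ht : 0 ≤ t) (v : Fin m → ℝ) (j : Fin m) :
    ∫⁻ w, (Ici 0).indicator (fun v => ENNReal.ofReal (pay v j)) (update v j w) ∂ν ≤
      ENNReal.ofReal t * ν (update v j ⁻¹' (Ici 0 ∩ {v | x v = some j})) +
        ENNReal.ofReal (excessRevenue ν t) := by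
  obtain ⟨c, hc⟩ := h.exists_threshold v j
  refine lintegral_le_add_excessRevenue (W := update v j ⁻¹' (Ici 0 ∩ {v | x v = some j})) hν ht
    (fun w ⟨hw, hx⟩ => (hc w hw hx).2) fun w => ?_
  by_cases hw : update v j w ∈ Ici 0
  · by_cases hx : x (update v j w) = some j
    · have hW : w ∈ update v j ⁻¹' (Ici 0 ∩ {v | x v = some j}) := ⟨hw, hx⟩
      rw [indicator_of_mem hw, indicator_of_mem hW, (hc w hw hx).1]
    · simp [indicator_of_mem hw, h.pay_eq_zero_of_ne hw hx]
  · simp [indicator_of_notMem hw]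

variable {F : Fin m → Measure ℝ} [∀ i, IsProbabilityMeasure (F i)]

theorem lintegral_pay_le (hF : ∀ᵐ v ∂Measure.pi F, 0 ≤ v) (j : Fin m)
    (hFj : Integrable id (F j)) {t : ℝ} (ht : 0 ≤ t) :
    ∫⁻ v, ENNReal.ofReal (pay v j) ∂Measure.pi F ≤
      ENNReal.ofReal t * Measure.pi F (Ici 0 ∩ {v | x v = some j}) +
        ENNReal.ofReal (excessRevenue (F j) t) := by
  set S := Ici (0 : Fin m → ℝ) ∩ {v | x v = some j}
  have hS : MeasurableSet S := measurableSet_Ici.inter (h.measX j)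
  calc ∫⁻ v, ENNReal.ofReal (pay v j) ∂Measure.pi F
      = ∫⁻ v, (Ici 0).indicator (fun v => ENNReal.ofReal (pay v j)) v ∂Measure.pi F :=
        lintegral_congr_ae <| hF.mono fun v hv =>
          (indicator_of_mem (s := Ici 0) hv (fun v => ENNReal.ofReal (pay v j))).symm
    _ ≤ ∫⁻ v, (S.indicator (fun _ => ENNReal.ofReal t) v + ENNReal.ofReal (excessRevenue (F j) t))
          ∂Measure.pi F := by
        refine lintegral_le_of_lmarginal_le {j}
          ((h.measPay j).ennreal_ofReal.indicator measurableSet_Ici)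
          ((measurable_const.indicator hS).add measurable_const) fun v => ?_
        simp only [lmarginal_singleton]
        have hslice : ∫⁻ w, S.indicator (fun _ => ENNReal.ofReal t) (update v j w) ∂F j =
            ENNReal.ofReal t * F j (update v j ⁻¹' S) :=
          lintegral_indicator_const (hS.preimage (measurable_update v)) _
        rw [lintegral_add_right _ measurable_const, lintegral_const, measure_univ, mul_one, hslice]
        exact h.lintegral_update_pay_le hFj ht v j
    _ = _ := by
        rw [lintegral_add_right _ measurable_const, lintegral_indicator_const hS, lintegral_const,
          measure_univ, mul_one]

theorem auctionRevenue_nonneg (μ : Measure (Fin m → ℝ)) : 0 ≤ auctionRevenue μ pay :=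
  integral_nonneg fun v => Finset.sum_nonneg fun j _ => h.pay_nonneg v j

theorem sum_measure_win_le_one (μ : Measure (Fin m → ℝ)) [IsProbabilityMeasure μ] :
    ∑ j, μ (Ici 0 ∩ {v | x v = some j}) ≤ 1 := by
  rw [← measure_biUnion_finset (fun i _ j _ hij => ?_)
    fun j _ => measurableSet_Ici.inter (h.measX j)]
  · exact prob_le_one
  · exact disjoint_left.2 fun v hi hj => hij (Option.some_injective _ (hi.2.symm.trans hj.2))

theorem auctionRevenue_le (hF : ∀ᵐ v ∂Measure.pi F, 0 ≤ v) (hF_mean : ∀ j, Integrable id (F j))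
    {t : ℝ} (ht : 0 ≤ t) :
    auctionRevenue (Measure.pi F) pay ≤ t + ∑ j, excessRevenue (F j) t := by
  have hexcess : ∀ j, 0 ≤ excessRevenue (F j) t := fun j => excessRevenue_nonneg (hF_mean j) ht
  rw [auctionRevenue, integral_eq_lintegral_of_nonneg_ae
    (ae_of_all _ fun v => Finset.sum_nonneg fun j _ => h.pay_nonneg v j)
    (Finset.measurable_sum _ fun j _ => h.measPay j).aestronglyMeasurable]
  refine ENNReal.toReal_le_of_le_ofReal (add_nonneg ht (Finset.sum_nonneg fun j _ => hexcess j)) ?_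
  calc ∫⁻ v, ENNReal.ofReal (∑ j, pay v j) ∂Measure.pi F
      = ∑ j, ∫⁻ v, ENNReal.ofReal (pay v j) ∂Measure.pi F := by
        simp_rw [ENNReal.ofReal_sum_of_nonneg fun j _ => h.pay_nonneg _ j]
        exact lintegral_finsetSum _ fun j _ => (h.measPay j).ennreal_ofReal
    _ ≤ ∑ j, (ENNReal.ofReal t * Measure.pi F (Ici 0 ∩ {v | x v = some j}) +
          ENNReal.ofReal (excessRevenue (F j) t)) :=
        Finset.sum_le_sum fun j _ => h.lintegral_pay_le hF j (hF_mean j) ht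
    _ ≤ ENNReal.ofReal t * 1 + ∑ j, ENNReal.ofReal (excessRevenue (F j) t) := by
        rw [Finset.sum_add_distrib, ← Finset.mul_sum]
        grw [h.sum_measure_win_le_one]
    _ = ENNReal.ofReal (t + ∑ j, excessRevenue (F j) t) := by
        rw [mul_one, ENNReal.ofReal_add ht (Finset.sum_nonneg fun j _ => hexcess j),
          ENNReal.ofReal_sum_of_nonneg fun j _ => hexcess j]

end IsAuction

section Lotteries

variable {m : ℕ}

theorem selP_nonneg : ∀ o : Option (Lottery m), 0 ≤ selP o
  | some ℓ => ℓ.p_nonneg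
  | none => le_rfl

theorem Lottery.q_le_one (ℓ : Lottery m) (j : Fin m) : ℓ.q j ≤ 1 :=
  (Finset.single_le_sum (fun i _ => ℓ.q_nonneg i) (Finset.mem_univ j)).trans ℓ.q_sum_le_one

theorem IsSelection.selP_le_sum {L : Set (Lottery m)} {s : (Fin m → ℝ) → Option (Lottery m)}
    (hs : IsSelection L s) {v : Fin m → ℝ} (hv : 0 ≤ v) : selP (s v) ≤ ∑ j, v j := by
  rcases hsv : s v with _ | ℓ
  · exact Finset.sum_nonneg fun j _ => hv j
  · have hutil := (hs.buy_opt v hv ℓ hsv).2.1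
    have hq : ∑ j, ℓ.q j * v j ≤ ∑ j, v j :=
      Finset.sum_le_sum fun j _ => mul_le_of_le_one_left (hv j) (ℓ.q_le_one j)
    rw [Lottery.util] at hutil
    exact (le_of_sub_nonneg hutil).trans hq

variable {μ : Measure (Fin m → ℝ)} (hμ : ∀ᵐ v ∂μ, 0 ≤ v)
  (hint : ∀ j, Integrable (fun v => v j) μ)
include hμ hint

theorem lotteryRevenue_le_integral_sum {L : Set (Lottery m)}
    {s : (Fin m → ℝ) → Option (Lottery m)} (hs : IsSelection L s) :
    lotteryRevenue μ s ≤ ∫ v, ∑ j, v j ∂μ := by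
  have hbound : ∀ᵐ v ∂μ, ‖selP (s v)‖ ≤ ∑ j, v j := hμ.mono fun v hv => by
    rw [Real.norm_of_nonneg (selP_nonneg _)]
    exact hs.selP_le_sum hv
  have hsum : Integrable (fun v => ∑ j, v j) μ := integrable_finsetSum _ fun j _ => hint j
  exact integral_mono_ae (hsum.mono' hs.measP.aestronglyMeasurable hbound) hsum
    (hbound.mono fun v hv => (le_abs_self _).trans hv)

theorem lotteryRevenue_le_optItemPricingRev {L : Set (Lottery m)}
    {s : (Fin m → ℝ) → Option (Lottery m)} (hL : L.Nonempty) (hL_item : IsItemPricing L)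
    (hs : IsSelection L s) : lotteryRevenue μ s ≤ optItemPricingRev μ := by
  refine le_csSup ⟨∫ v, ∑ j, v j ∂μ, ?_⟩ ⟨L, s, hL, hL_item, hs, rfl⟩
  rintro _ ⟨L, s, -, -, hs, rfl⟩
  exact lotteryRevenue_le_integral_sum hμ hint hs

end Lotteries

theorem optItemPricingRev_nonneg {m : ℕ} (μ : Measure (Fin m → ℝ)) : 0 ≤ optItemPricingRev μ :=
  Real.sSup_nonneg <| by
    rintro _ ⟨L, s, -, -, -, rfl⟩
    exact integral_nonneg fun v => selP_nonneg _

section ItemPricing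

variable {m : ℕ}

noncomputable def itemLottery (j : Fin m) (a : ℝ) (ha : 0 ≤ a) : Lottery m where
  q j' := if j' = j then 1 else 0
  p := a
  q_nonneg j' := by split_ifs <;> norm_num
  q_sum_le_one := by simp
  p_nonneg := ha

theorem itemLottery_util (j : Fin m) (a : ℝ) (ha : 0 ≤ a) (v : Fin m → ℝ) :
    (itemLottery j a ha).util v = v j - a := by
  simp [Lottery.util, itemLottery]

variable (p : Fin m → ℝ) (hp : ∀ j, 0 ≤ p j)

def itemMenu : Set (Lottery m) := range fun j => itemLottery j (p j) (hp j)

theorem isItemPricing_itemMenu : IsItemPricing (itemMenu p hp) := by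
  rintro _ ⟨j, rfl⟩
  exact ⟨j, rfl⟩

theorem setOf_exists_le_eq_compl :
    {v : Fin m → ℝ | ∃ j, p j ≤ v j} = (univ.pi fun i => Iio (p i))ᶜ := by
  ext v
  simp

def soleAffordable (j : Fin m) : Set (Fin m → ℝ) :=
  univ.pi (update (fun i => Iio (p i)) j (Ici (p j)))

theorem mem_soleAffordable {j : Fin m} {v : Fin m → ℝ} :
    v ∈ soleAffordable p j ↔ ∀ i, (p i ≤ v i ↔ i = j) := by
  refine forall_congr' fun i => ?_
  rcases eq_or_ne i j with rfl | hij
  · simp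
  · simp [hij]

variable [Nonempty (Fin m)]

noncomputable def itemSel (v : Fin m → ℝ) : Option (Lottery m) :=
  if ∃ j, p j ≤ v j then some (itemLottery (firstArgmax (v - p)) _ (hp (firstArgmax (v - p))))
  else none

theorem selP_itemSel (v : Fin m → ℝ) :
    selP (itemSel p hp v) = if ∃ j, p j ≤ v j then p (firstArgmax (v - p)) else 0 := by
  unfold itemSel
  split_ifs <;> rfl

theorem selQ_itemSel (v : Fin m → ℝ) (j : Fin m) :
    selQ (itemSel p hp v) j =
      if ∃ j, p j ≤ v j then (if j = firstArgmax (v - p) then 1 else 0) else 0 := by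
  unfold itemSel
  by_cases hv : ∃ j, p j ≤ v j
  · rw [if_pos hv, if_pos hv]
    rfl
  · rw [if_neg hv, if_neg hv]
    rfl

theorem isSelection_itemSel : IsSelection (itemMenu p hp) (itemSel p hp) := by
  have hbuy : MeasurableSet {v : Fin m → ℝ | ∃ j, p j ≤ v j} := by
    rw [setOf_exists_le_eq_compl]
    exact (MeasurableSet.univ_pi fun i => measurableSet_Iio).compl
  have hargmax : Measurable fun v : Fin m → ℝ => firstArgmax (v - p) :=
    measurable_firstArgmax fun i =>
      show Measurable fun v : Fin m → ℝ => v i - p i from (measurable_pi_apply i).sub_const _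
  refine ⟨fun j => ?_, ?_, fun v _ ℓ hℓ => ?_, fun v _ hnone => ?_⟩
  · simp_rw [selQ_itemSel]
    exact Measurable.ite hbuy
      ((measurable_of_finite fun b => if j = b then (1 : ℝ) else 0).comp hargmax) measurable_const
  · simp_rw [selP_itemSel]
    exact Measurable.ite hbuy ((measurable_of_finite p).comp hargmax) measurable_const
  · unfold itemSel at hℓ
    split_ifs at hℓ with hv
    cases hℓ
    obtain ⟨j, hj⟩ := hv
    have hmax := le_apply_firstArgmax (v - p)
    simp only [Pi.sub_apply] at hmax
    refine ⟨⟨_, rfl⟩, ?_, ?_⟩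
    · rw [itemLottery_util]
      linarith [hmax j]
    · rintro _ ⟨i, rfl⟩
      simp only [itemLottery_util]
      exact hmax i
  · unfold itemSel at hnone
    split_ifs at hnone with hv
    push Not at hv
    rintro _ ⟨i, rfl⟩
    rw [itemLottery_util]
    linarith [hv i]

theorem indicator_add_sum_le_selP_itemSel {t : ℝ} (htp : ∀ j, t ≤ p j) (v : Fin m → ℝ) :
    (univ.pi fun i => Iio (p i))ᶜ.indicator (fun _ => t) v +
        ∑ j, (soleAffordable p j).indicator (fun _ => p j - t) v ≤
      selP (itemSel p hp v) := by
  rw [selP_itemSel, ← setOf_exists_le_eq_compl]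
  by_cases hv : ∃ j, p j ≤ v j
  · set b := firstArgmax (v - p)
    have hb : p b ≤ v b := by
      obtain ⟨j, hj⟩ := hv
      have := le_apply_firstArgmax (v - p) j
      simp only [Pi.sub_apply] at this
      linarith
    have hsum : ∑ j, (soleAffordable p j).indicator (fun _ => p j - t) v =
        (soleAffordable p b).indicator (fun _ => p b - t) v :=
      Finset.sum_eq_single b
        (fun j _ hjb =>
          indicator_of_notMem (fun hj => hjb (((mem_soleAffordable p).1 hj b).1 hb).symm) _)
        (absurd (Finset.mem_univ b))
    rw [if_pos hv, indicator_of_mem (show v ∈ {v | ∃ j, p j ≤ v j} from hv), hsum]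
    linarith [indicator_apply_le' (s := soleAffordable p b) (f := fun _ => p b - t) (a := v)
      (fun _ => le_rfl) (fun _ => sub_nonneg.2 (htp b))]
  · have hnot : ∀ j, v ∉ soleAffordable p j := fun j hj =>
      hv ⟨j, ((mem_soleAffordable p).1 hj j).2 rfl⟩
    rw [if_neg hv, indicator_of_notMem (show v ∉ {v | ∃ j, p j ≤ v j} from hv),
      Finset.sum_eq_zero fun j _ => indicator_of_notMem (hnot j) _, add_zero]

end ItemPricing

section ItemPricingRevenue

variable {m : ℕ} (F : Fin m → Measure ℝ) [∀ i, IsProbabilityMeasure (F i)] (p : Fin m → ℝ)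

theorem mul_prod_le_measureReal_soleAffordable (j : Fin m) :
    (F j).real (Ici (p j)) * ∏ i, (F i).real (Iio (p i)) ≤
      (Measure.pi F).real (soleAffordable p j) := by
  have hrest : ∏ i, (F i).real (Iio (p i)) ≤ ∏ i ∈ Finset.univ.erase j, (F i).real (Iio (p i)) := by
    rw [← Finset.mul_prod_erase _ _ (Finset.mem_univ j)]
    exact mul_le_of_le_one_left (Finset.prod_nonneg fun i _ => measureReal_nonneg)
      measureReal_le_one
  have hsole : (Measure.pi F).real (soleAffordable p j) =
      (F j).real (Ici (p j)) * ∏ i ∈ Finset.univ.erase j, (F i).real (Iio (p i)) := by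
    rw [soleAffordable, measureReal_pi_univ_pi, ← Finset.mul_prod_erase _ _ (Finset.mem_univ j),
      update_self]
    congr 1
    refine Finset.prod_congr rfl fun i hi => ?_
    rw [update_of_ne (Finset.ne_of_mem_erase hi)]
  rw [hsole]
  exact mul_le_mul_of_nonneg_left hrest measureReal_nonneg

variable [Nonempty (Fin m)] (hp : ∀ j, 0 ≤ p j)

theorem integrable_selP_itemSel :
    Integrable (fun v => selP (itemSel p hp v)) (Measure.pi F) := by
  refine .of_bound (isSelection_itemSel p hp).measP.aestronglyMeasurable (∑ j, p j)
    (ae_of_all _ fun v => ?_)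
  rw [Real.norm_of_nonneg (selP_nonneg _), selP_itemSel]
  split_ifs
  · exact Finset.single_le_sum (fun j _ => hp j) (Finset.mem_univ _)
  · exact Finset.sum_nonneg fun j _ => hp j

theorem lotteryRevenue_itemSel_ge {t : ℝ} (htp : ∀ j, t ≤ p j) :
    t * (1 - ∏ i, (F i).real (Iio (p i))) +
        (∏ i, (F i).real (Iio (p i))) * ∑ j, (p j - t) * (F j).real (Ici (p j)) ≤
      lotteryRevenue (Measure.pi F) (itemSel p hp) := by
  have hnone : MeasurableSet (univ.pi fun i => Iio (p i)) :=
    .univ_pi fun i => measurableSet_Iio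
  have hsole (j : Fin m) : MeasurableSet (soleAffordable p j) :=
    .univ_pi fun i => by
      rcases eq_or_ne i j with rfl | hij
      · simp [measurableSet_Ici]
      · simp [hij, measurableSet_Iio]
  have hlower : ∫ v, ((univ.pi fun i => Iio (p i))ᶜ.indicator (fun _ => t) v +
      ∑ j, (soleAffordable p j).indicator (fun _ => p j - t) v) ∂Measure.pi F ≤
      lotteryRevenue (Measure.pi F) (itemSel p hp) := integral_mono
    (((integrable_const t).indicator hnone.compl).add
      (integrable_finsetSum _ fun j _ => (integrable_const (p j - t)).indicator (hsole j)))
    (integrable_selP_itemSel F p hp) (indicator_add_sum_le_selP_itemSel p hp htp)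
  rw [integral_add ((integrable_const t).indicator hnone.compl)
      (integrable_finsetSum _ fun j _ => (integrable_const (p j - t)).indicator (hsole j)),
    integral_indicator_const _ hnone.compl,
    integral_finsetSum _ fun j _ => (integrable_const (p j - t)).indicator (hsole j)] at hlower
  simp only [integral_indicator_const _ (hsole _), measureReal_compl hnone, probReal_univ,
    measureReal_pi_univ_pi, smul_eq_mul] at hlower
  refine le_trans ?_ hlower
  rw [Finset.mul_sum, mul_comm t]
  refine add_le_add le_rfl (Finset.sum_le_sum fun j _ => ?_)
  calc (∏ i, (F i).real (Iio (p i))) * ((p j - t) * (F j).real (Ici (p j)))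
      = (p j - t) * ((F j).real (Ici (p j)) * ∏ i, (F i).real (Iio (p i))) := by ring
    _ ≤ (p j - t) * (Measure.pi F).real (soleAffordable p j) :=
        mul_le_mul_of_nonneg_left (mul_prod_le_measureReal_soleAffordable F p j)
          (sub_nonneg.2 (htp j))
    _ = _ := mul_comm _ _

end ItemPricingRevenue

/-- For a single unit-demand buyer with independent item
values `v j ∼ F j` (Borel distributions on `ℝ≥0` with finite mean), the optimal
item-pricing revenue is at least half the expected revenue of every IC, IR
deterministic single-item auction for `m` independent bidders with values
`v j ∼ F j`. -/
theorem optItemPricing_ge_half_auction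
    {m : ℕ} (F : Fin m → Measure ℝ) [∀ j, IsProbabilityMeasure (F j)]
    (hF_nonneg : ∀ j, F j (Set.Iio 0) = 0)
    (hF_mean : ∀ j, Integrable id (F j))
    (x : (Fin m → ℝ) → Option (Fin m)) (pay : (Fin m → ℝ) → Fin m → ℝ)
    (hauction : IsAuction x pay) :
    (1 / 2) * auctionRevenue (Measure.pi F) pay ≤ optItemPricingRev (Measure.pi F) := by
  have hμ := ae_nonneg_pi hF_nonneg
  set t := auctionRevenue (Measure.pi F) pay / 2 with ht_def
  have ht : 0 ≤ t := div_nonneg (hauction.auctionRevenue_nonneg _) zero_le_two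
  have htail : t ≤ ∑ j, excessRevenue (F j) t := by
    linarith [hauction.auctionRevenue_le hμ hF_mean ht, ht_def]
  rw [show 1 / 2 * auctionRevenue (Measure.pi F) pay = t by ring]
  refine le_of_forall_sub_le fun ε hε => ?_
  rcases isEmpty_or_nonempty (Fin m) with hm | hm
  · have : t ≤ 0 := by simpa using htail
    linarith [optItemPricingRev_nonneg (Measure.pi F)]
  obtain ⟨p, htp, hprices⟩ := exists_sum_excessRevenue_sub_le F t hε
  have hp : ∀ j, 0 ≤ p j := fun j => ht.trans (htp j)
  set B := ∏ i, (F i).real (Iio (p i))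
  have hB₀ : 0 ≤ B := Finset.prod_nonneg fun i _ => measureReal_nonneg
  have hB₁ : B ≤ 1 :=
    Finset.prod_le_one (fun i _ => measureReal_nonneg) fun i _ => measureReal_le_one
  have hS : t - ε ≤ ∑ j, (p j - t) * (F j).real (Ici (p j)) := by linarith
  calc t - ε ≤ t * (1 - B) + B * ∑ j, (p j - t) * (F j).real (Ici (p j)) := by
        nlinarith [mul_nonneg hB₀ (sub_nonneg.2 hS), mul_nonneg (sub_nonneg.2 hB₁) hε.le]
    _ ≤ lotteryRevenue (Measure.pi F) (itemSel p hp) := lotteryRevenue_itemSel_ge F p hp htp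
    _ ≤ optItemPricingRev (Measure.pi F) :=
        lotteryRevenue_le_optItemPricingRev hμ (integrable_eval_pi hF_mean) (range_nonempty _)
          (isItemPricing_itemMenu p hp) (isSelection_itemSel p hp)
end
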